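/- arXiv:2106.10049 — 4 statements merged into one kernel-verified Lean document; each statement's English description precedes it below -/
import Mathlib

section
/- A graph G has the property that every induced subgraph of G has at most two moplexes if and only if G is a cochain graph. -/
open SimpleGraph

namespace MoplexPaper

variable {V : Type*}

/-- Reachability in `G - S`: a walk from `u` to `v` all of whose vertices avoid `S`. -/
def ReachOutside (G : SimpleGraph V) (S : Set V) (u v : V) : Prop :=
  ∃ p : G.Walk u v, ∀ x ∈ p.support, x ∉ S

/-- `S` is a `u,v`-separator. -/
def IsSeparator (G : SimpleGraph V) (u v : V) (S : Set V) : Prop :=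
  ¬ G.Adj u v ∧ u ∉ S ∧ v ∉ S ∧ ¬ ReachOutside G S u v

/-- `S` is a minimal `u,v`-separator. -/
def IsMinSeparator (G : SimpleGraph V) (u v : V) (S : Set V) : Prop :=
  IsSeparator G u v S ∧ ∀ T ⊂ S, ¬ IsSeparator G u v T

/-- `S` is a minimal separator of `G`. -/
def IsMinimalSeparator (G : SimpleGraph V) (S : Set V) : Prop :=
  ∃ u v, u ≠ v ∧ IsMinSeparator G u v S

/-- The (open) neighbourhood of a set of vertices. -/
def setNbhd (G : SimpleGraph V) (X : Set V) : Set V :=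
  {v | v ∉ X ∧ ∃ x ∈ X, G.Adj v x}

/-- The closed neighbourhood of a vertex. -/
def closedNbhd (G : SimpleGraph V) (v : V) : Set V :=
  insert v (G.neighborSet v)

/-- `M` is a module of `G`. -/
def IsModule (G : SimpleGraph V) (M : Set V) : Prop :=
  ∀ v ∉ M, (∀ x ∈ M, G.Adj v x) ∨ (∀ x ∈ M, ¬ G.Adj v x)

/-- `M` is a clique module of `G`. -/
def IsCliqueModule (G : SimpleGraph V) (M : Set V) : Prop :=
  G.IsClique M ∧ IsModule G M

/-- `X` is a moplex of `G`: an inclusion-maximal clique module whose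
neighbourhood is empty or a minimal separator. -/
def IsMoplex (G : SimpleGraph V) (X : Set V) : Prop :=
  X.Nonempty ∧ IsCliqueModule G X ∧
  (∀ Y, X ⊆ Y → IsCliqueModule G Y → Y = X) ∧
  (setNbhd G X = ∅ ∨ IsMinimalSeparator G (setNbhd G X))

/-- A vertex is moplicial if it belongs to a moplex. -/
def Moplicial (G : SimpleGraph V) (v : V) : Prop := ∃ X, IsMoplex G X ∧ v ∈ X

/-- An extension of `v`: an induced `P₃` with midpoint `v`. -/
def IsExtension (G : SimpleGraph V) (v a b : V) : Prop :=
  a ≠ b ∧ G.Adj v a ∧ G.Adj v b ∧ ¬ G.Adj a b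

/-- A cycle is induced if the only edges of `G` among its vertices are its own edges. -/
def IsInducedCycle (G : SimpleGraph V) {w : V} (c : G.Walk w w) : Prop :=
  c.IsCycle ∧ ∀ x ∈ c.support, ∀ y ∈ c.support, G.Adj x y → s(x, y) ∈ c.edges

/-- `v` is avoidable: every extension of `v` is contained in an induced cycle. -/
def Avoidable (G : SimpleGraph V) (v : V) : Prop :=
  ∀ a b, IsExtension G v a b →
    ∃ (w : V) (c : G.Walk w w), IsInducedCycle G c ∧
      a ∈ c.support ∧ v ∈ c.support ∧ b ∈ c.support

/-- `A` is an asteroidal set of `G`. -/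
def IsAsteroidal (G : SimpleGraph V) (A : Set V) : Prop :=
  ∀ a ∈ A, ∀ x ∈ A, ∀ y ∈ A, x ≠ a → y ≠ a →
    ReachOutside G (closedNbhd G a) x y

/-- `G` is AT-free: it has no asteroidal triple. -/
def ATFree (G : SimpleGraph V) : Prop :=
  ¬ ∃ A : Set V, IsAsteroidal G A ∧ A.ncard = 3

/-- `G` has exactly the two moplexes `U` and `W`. -/
def HasExactlyTwoMoplexes (G : SimpleGraph V) (U W : Set V) : Prop :=
  IsMoplex G U ∧ IsMoplex G W ∧ U ≠ W ∧ ∀ X, IsMoplex G X → X = U ∨ X = W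

/-- `G` is not complete. -/
def NonComplete (G : SimpleGraph V) : Prop :=
  ∃ x y : V, x ≠ y ∧ ¬ G.Adj x y

/-- `G` is a cochain graph: its vertex set is partitioned into two cliques, one of
which has closed neighbourhoods linearly ordered by inclusion. -/
def IsCochain (G : SimpleGraph V) : Prop :=
  ∃ X Y : Set V, Disjoint X Y ∧ X ∪ Y = Set.univ ∧ G.IsClique X ∧ G.IsClique Y ∧
    ∀ a ∈ X, ∀ b ∈ X,
      closedNbhd G a ⊆ closedNbhd G b ∨ closedNbhd G b ⊆ closedNbhd G a


/-! ### Auxiliary lemmas -/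

section Aux

variable {W : Type*} {G : SimpleGraph W}

lemma mem_closedNbhd {v z : W} : z ∈ closedNbhd G v ↔ z = v ∨ G.Adj v z := by
  simp [closedNbhd]

lemma self_mem_closedNbhd (v : W) : v ∈ closedNbhd G v := mem_closedNbhd.2 (Or.inl rfl)

lemma closedNbhd_subset_of_cliqueModule {M : Set W} (hM : IsCliqueModule G M)
    {v w : W} (hv : v ∈ M) (hw : w ∈ M) : closedNbhd G w ⊆ closedNbhd G v := by
  intro z hz
  rcases mem_closedNbhd.1 hz with rfl | hadj
  · by_cases hzv : z = v
    · exact mem_closedNbhd.2 (Or.inl hzv)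
    · exact mem_closedNbhd.2 (Or.inr ((hM.1 hv hw (Ne.symm hzv))))
  · by_cases hzM : z ∈ M
    · by_cases hzv : z = v
      · exact mem_closedNbhd.2 (Or.inl hzv)
      · exact mem_closedNbhd.2 (Or.inr ((hM.1 hv hzM (Ne.symm hzv))))
    · rcases hM.2 z hzM with hall | hnone
      · exact mem_closedNbhd.2 (Or.inr (hall v hv).symm)
      · exact absurd hadj.symm (hnone w hw)

lemma closedNbhd_eq_of_cliqueModule {M : Set W} (hM : IsCliqueModule G M)
    {v w : W} (hv : v ∈ M) (hw : w ∈ M) : closedNbhd G w = closedNbhd G v :=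
  Set.Subset.antisymm (closedNbhd_subset_of_cliqueModule hM hv hw)
    (closedNbhd_subset_of_cliqueModule hM hw hv)

lemma class_cliqueModule (v : W) :
    IsCliqueModule G {w | closedNbhd G w = closedNbhd G v} := by
  constructor
  · intro x hx y hy hxy
    have : x ∈ closedNbhd G y := by
      rw [hy, ← hx]; exact self_mem_closedNbhd x
    rcases mem_closedNbhd.1 this with h | h
    · exact absurd h hxy
    · exact h.symm
  · intro z hz
    by_cases h : ∀ x ∈ {w | closedNbhd G w = closedNbhd G v}, G.Adj z x
    · exact Or.inl h
    · push_neg at h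
      obtain ⟨x, hx, hzx⟩ := h
      refine Or.inr fun y hy hzy => ?_
      have : z ∈ closedNbhd G y := mem_closedNbhd.2 (Or.inr hzy.symm)
      rw [hy, ← hx] at this
      rcases mem_closedNbhd.1 this with h' | h'
      · exact hz (h' ▸ hx)
      · exact hzx h'.symm

lemma moplex_eq_class {M : Set W} (hM : IsMoplex G M) {v : W} (hv : v ∈ M) :
    M = {w | closedNbhd G w = closedNbhd G v} := by
  have hsub : M ⊆ {w | closedNbhd G w = closedNbhd G v} := fun w hw =>
    closedNbhd_eq_of_cliqueModule hM.2.1 hv hw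
  exact (hM.2.2.1 _ hsub (class_cliqueModule v)).symm

lemma setNbhd_cliqueModule {M : Set W} (hM : IsCliqueModule G M) {v : W} (hv : v ∈ M) :
    setNbhd G M = closedNbhd G v \ M := by
  ext z
  constructor
  · rintro ⟨hzM, x, hxM, hadj⟩
    refine ⟨?_, hzM⟩
    rcases hM.2 z hzM with hall | hnone
    · exact mem_closedNbhd.2 (Or.inr (hall v hv).symm)
    · exact absurd hadj (hnone x hxM)
  · rintro ⟨hzN, hzM⟩
    rcases mem_closedNbhd.1 hzN with rfl | hadj
    · exact absurd hv hzM
    · exact ⟨hzM, v, hv, hadj.symm⟩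

/-- The key walk argument. -/
lemma walk_contra {S D M : Set W} {u : W}
    (hMD : ∀ z, z ∈ M → z ∈ D → False)
    (hDS : ∀ z, z ∈ D → z ∈ S → False)
    (hMS : ∀ x y, x ∉ M → y ∈ M → G.Adj x y → x ∈ S)
    (hu : ∀ x, x ∈ D → ¬ G.Adj u x)
    (hcover : ∀ z : W, z ∈ M ∨ z ∈ D ∨ z ∈ S) :
    ∀ {x y : W} (p : G.Walk x y), x ∈ D → y ∈ M →
      (∀ z ∈ p.support, z ∈ S → z = u) → False := by
  intro x y p
  induction p with
  | nil => intro hx hy _; exact hMD _ hy hx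
  | @cons a c y h q ih =>
    intro hx hy hsup
    rcases hcover c with hcM | hcD | hcS
    · have haM : a ∉ M := fun h' => hMD _ h' hx
      exact hDS a hx (hMS a c haM hcM h)
    · refine ih hcD hy fun z hz hzS => hsup z ?_ hzS
      rw [SimpleGraph.Walk.support_cons]
      exact List.mem_cons_of_mem _ hz
    · have hcu : c = u := hsup c (by
        rw [SimpleGraph.Walk.support_cons]
        exact List.mem_cons_of_mem _ q.start_mem_support) hcS
      exact hu a hx (hcu ▸ h.symm)

/-- Core lemma: in a graph covered by two cliques, a vertex of a moplex has an
inclusion-minimal closed neighbourhood. -/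
lemma core_lemma {A B : Set W} (hA : G.IsClique A) (hB : G.IsClique B)
    (hun : A ∪ B = Set.univ) {v : W} (hvA : v ∈ A) {M : Set W}
    (hM : IsMoplex G M) (hvM : v ∈ M) {u : W}
    (hsub : closedNbhd G u ⊆ closedNbhd G v)
    (hns : ¬ closedNbhd G v ⊆ closedNbhd G u) : False := by
  classical
  have huv : u ≠ v := by rintro rfl; exact hns hsub
  have hAdjvu : G.Adj v u := by
    rcases mem_closedNbhd.1 (hsub (self_mem_closedNbhd u)) with h | h
    · exact absurd h huv
    · exact h
  have huM : u ∉ M := fun h => by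
    have := closedNbhd_eq_of_cliqueModule hM.2.1 hvM h
    rw [← this] at hns; exact hns (subset_refl _)
  have hSeq : setNbhd G M = closedNbhd G v \ M := setNbhd_cliqueModule hM.2.1 hvM
  set S := setNbhd G M with hSdef
  set D := {z : W | z ∉ closedNbhd G v} with hDdef
  have hMsub : M ⊆ closedNbhd G v := by
    intro w hw
    by_cases hwv : w = v
    · exact mem_closedNbhd.2 (Or.inl hwv)
    · exact mem_closedNbhd.2 (Or.inr (hM.2.1.1 hvM hw (Ne.symm hwv)))
  have hMD : ∀ z, z ∈ M → z ∈ D → False := fun z hz hz' => hz' (hMsub hz)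
  have hDS : ∀ z, z ∈ D → z ∈ S → False := fun z hz hz' => by
    rw [hSeq] at hz'; exact hz hz'.1
  have hDB : ∀ z, z ∈ D → z ∈ B := by
    intro z hz
    have hzu : z ∉ A := by
      intro hzA
      by_cases hzv : z = v
      · exact hz (mem_closedNbhd.2 (Or.inl hzv))
      · exact hz (mem_closedNbhd.2 (Or.inr (hA hvA hzA (Ne.symm hzv))))
    have : z ∈ A ∪ B := hun ▸ Set.mem_univ z
    exact this.resolve_left hzu
  have hDclique : ∀ x ∈ D, ∀ y ∈ D, x ≠ y → G.Adj x y := fun x hx y hy hxy =>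
    hB (hDB x hx) (hDB y hy) hxy
  have hMS : ∀ x y, x ∉ M → y ∈ M → G.Adj x y → x ∈ S := fun x y hx hy hadj =>
    ⟨hx, y, hy, hadj⟩
  have hu' : ∀ x, x ∈ D → ¬ G.Adj u x := fun x hx hadj =>
    hx (hsub (mem_closedNbhd.2 (Or.inr hadj)))
  have hcover : ∀ z : W, z ∈ M ∨ z ∈ D ∨ z ∈ S := by
    intro z
    by_cases hzM : z ∈ M
    · exact Or.inl hzM
    · by_cases hzN : z ∈ closedNbhd G v
      · exact Or.inr (Or.inr (hSeq ▸ ⟨hzN, hzM⟩))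
      · exact Or.inr (Or.inl hzN)
  have huS : u ∈ S := hSeq ▸ ⟨mem_closedNbhd.2 (Or.inr hAdjvu), huM⟩
  rcases hM.2.2.2 with hemp | hmin
  · rw [hSdef] at huS; rw [hemp] at huS; exact huS
  · obtain ⟨a, b, hab, ⟨⟨hnadj, haS, hbS, _⟩, hminT⟩⟩ := hmin
    have hposA : a ∈ M ∨ a ∈ D := by
      rcases hcover a with h | h | h
      · exact Or.inl h
      · exact Or.inr h
      · exact absurd h haS
    have hposB : b ∈ M ∨ b ∈ D := by
      rcases hcover b with h | h | h
      · exact Or.inl h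
      · exact Or.inr h
      · exact absurd h hbS
    have hMclique := hM.2.1.1
    have hreach : ReachOutside G (S \ {u}) a b := by
      by_contra hr
      refine hminT (S \ {u}) ?_ ⟨hnadj, fun h => haS h.1, fun h => hbS h.1, hr⟩
      exact (Set.ssubset_iff_of_subset Set.diff_subset).2 ⟨u, huS, fun h => h.2 rfl⟩
    obtain ⟨p, hp⟩ := hreach
    have hsup : ∀ z ∈ p.support, z ∈ S → z = u := by
      intro z hz hzS
      by_contra hne
      exact hp z hz ⟨hzS, hne⟩
    rcases hposA with haM | haD
    · rcases hposB with hbM | hbD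
      · exact hnadj (hMclique haM hbM hab)
      · exact walk_contra hMD hDS hMS hu' hcover p.reverse hbD haM
          (fun z hz => hsup z (by rwa [SimpleGraph.Walk.support_reverse, List.mem_reverse] at hz))
    · rcases hposB with hbM | hbD
      · exact walk_contra hMD hDS hMS hu' hcover p haD hbM hsup
      · exact hnadj (hDclique a haD b hbD hab)
  
lemma chain_other_side {X Y : Set W} (hY : G.IsClique Y) (hun : X ∪ Y = Set.univ)
    (hchain : ∀ a ∈ X, ∀ b ∈ X,
      closedNbhd G a ⊆ closedNbhd G b ∨ closedNbhd G b ⊆ closedNbhd G a)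
    {y y' : W} (hy : y ∈ Y) (hy' : y' ∈ Y) :
    closedNbhd G y ⊆ closedNbhd G y' ∨ closedNbhd G y' ⊆ closedNbhd G y := by
  by_contra h
  push_neg at h
  obtain ⟨h1, h2⟩ := h
  obtain ⟨p, hp1, hp2⟩ := Set.not_subset.1 h1
  obtain ⟨q, hq1, hq2⟩ := Set.not_subset.1 h2
  have hyy' : y ∈ closedNbhd G y' := by
    by_cases h' : y = y'
    · exact mem_closedNbhd.2 (Or.inl h')
    · exact mem_closedNbhd.2 (Or.inr (hY hy' hy (Ne.symm h')))
  have hy'y : y' ∈ closedNbhd G y := by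
    by_cases h' : y' = y
    · exact mem_closedNbhd.2 (Or.inl h')
    · exact mem_closedNbhd.2 (Or.inr (hY hy hy' (Ne.symm h')))
  have hpy : G.Adj y p := by
    rcases mem_closedNbhd.1 hp1 with rfl | h'
    · exact absurd hyy' hp2
    · exact h'
  have hqy' : G.Adj y' q := by
    rcases mem_closedNbhd.1 hq1 with rfl | h'
    · exact absurd hy'y hq2
    · exact h'
  have hpX : p ∈ X := by
    have hpY : p ∉ Y := by
      intro hpY
      by_cases h' : p = y'
      · exact hp2 (mem_closedNbhd.2 (Or.inl h'))
      · exact hp2 (mem_closedNbhd.2 (Or.inr (hY hy' hpY (Ne.symm h'))))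
    exact ((hun ▸ Set.mem_univ p : p ∈ X ∪ Y)).resolve_right hpY
  have hqX : q ∈ X := by
    have hqY : q ∉ Y := by
      intro hqY
      by_cases h' : q = y
      · exact hq2 (mem_closedNbhd.2 (Or.inl h'))
      · exact hq2 (mem_closedNbhd.2 (Or.inr (hY hy hqY (Ne.symm h'))))
    exact ((hun ▸ Set.mem_univ q : q ∈ X ∪ Y)).resolve_right hqY
  have hyNp : y ∈ closedNbhd G p := mem_closedNbhd.2 (Or.inr hpy.symm)
  have hyNq : y ∉ closedNbhd G q := by
    intro h'
    rcases mem_closedNbhd.1 h' with rfl | h''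
    · exact hq2 (self_mem_closedNbhd _)
    · exact hq2 (mem_closedNbhd.2 (Or.inr h''.symm))
  have hy'Nq : y' ∈ closedNbhd G q := mem_closedNbhd.2 (Or.inr hqy'.symm)
  have hy'Np : y' ∉ closedNbhd G p := by
    intro h'
    rcases mem_closedNbhd.1 h' with rfl | h''
    · exact hp2 (self_mem_closedNbhd _)
    · exact hp2 (mem_closedNbhd.2 (Or.inr h''.symm))
  rcases hchain p hpX q hqX with h' | h'
  · exact hyNq (h' hyNp)
  · exact hy'Np (h' hy'Nq)

lemma moplex_unique {A B : Set W} (hA : G.IsClique A) (hB : G.IsClique B)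
    (hun : A ∪ B = Set.univ)
    (hchain : ∀ a ∈ A, ∀ b ∈ A,
      closedNbhd G a ⊆ closedNbhd G b ∨ closedNbhd G b ⊆ closedNbhd G a)
    {M₁ M₂ : Set W} (h1 : IsMoplex G M₁) (h2 : IsMoplex G M₂)
    {u v : W} (hu1 : u ∈ M₁) (huA : u ∈ A) (hv2 : v ∈ M₂) (hvA : v ∈ A) :
    M₁ = M₂ := by
  have heq : closedNbhd G u = closedNbhd G v := by
    rcases hchain u huA v hvA with h | h
    · by_cases h' : closedNbhd G v ⊆ closedNbhd G u
      · exact Set.Subset.antisymm h h'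
      · exact absurd (core_lemma hA hB hun hvA h2 hv2 h h') id
    · by_cases h' : closedNbhd G u ⊆ closedNbhd G v
      · exact Set.Subset.antisymm h' h
      · exact absurd (core_lemma hA hB hun huA h1 hu1 h h') id
  rw [moplex_eq_class h1 hu1, moplex_eq_class h2 hv2, heq]

lemma ncard_moplexes_le_two (hc : IsCochain G) :
    {M : Set W | IsMoplex G M}.ncard ≤ 2 := by
  classical
  obtain ⟨X, Y, _, hun, hX, hY, hchain⟩ := hc
  by_cases hfin : {M : Set W | IsMoplex G M}.Finite
  · by_contra h
    push_neg at h
    obtain ⟨M₁, h1, M₂, h2, M₃, h3, h12, h13, h23⟩ := (Set.two_lt_ncard hfin).1 h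
    have h1' : IsMoplex G M₁ := h1
    have h2' : IsMoplex G M₂ := h2
    have h3' : IsMoplex G M₃ := h3
    obtain ⟨m₁, hm₁⟩ := h1'.1
    obtain ⟨m₂, hm₂⟩ := h2'.1
    obtain ⟨m₃, hm₃⟩ := h3'.1
    have hchainY : ∀ a ∈ Y, ∀ b ∈ Y,
        closedNbhd G a ⊆ closedNbhd G b ∨ closedNbhd G b ⊆ closedNbhd G a :=
      fun a ha b hb => chain_other_side hY hun hchain ha hb
    have hunY : Y ∪ X = Set.univ := by rw [Set.union_comm]; exact hun
    have uX : ∀ {N₁ N₂ : Set W}, IsMoplex G N₁ → IsMoplex G N₂ →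
        ∀ (a b : W), a ∈ N₁ → a ∈ X → b ∈ N₂ → b ∈ X → N₁ = N₂ :=
      fun hN1 hN2 a b ha haX hb hbX => moplex_unique hX hY hun hchain hN1 hN2 ha haX hb hbX
    have uY : ∀ {N₁ N₂ : Set W}, IsMoplex G N₁ → IsMoplex G N₂ →
        ∀ (a b : W), a ∈ N₁ → a ∈ Y → b ∈ N₂ → b ∈ Y → N₁ = N₂ :=
      fun hN1 hN2 a b ha haY hb hbY =>
        moplex_unique hY hX hunY hchainY hN1 hN2 ha haY hb hbY
    have s₁ : m₁ ∈ X ∨ m₁ ∈ Y := by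
      have := Set.mem_univ m₁
      rw [← hun] at this
      exact this
    have s₂ : m₂ ∈ X ∨ m₂ ∈ Y := by
      have := Set.mem_univ m₂
      rw [← hun] at this
      exact this
    have s₃ : m₃ ∈ X ∨ m₃ ∈ Y := by
      have := Set.mem_univ m₃
      rw [← hun] at this
      exact this
    rcases s₁ with hs1 | hs1 <;> rcases s₂ with hs2 | hs2 <;> rcases s₃ with hs3 | hs3
    · exact h12 (uX h1' h2' _ _ hm₁ hs1 hm₂ hs2)
    · exact h12 (uX h1' h2' _ _ hm₁ hs1 hm₂ hs2)
    · exact h13 (uX h1' h3' _ _ hm₁ hs1 hm₃ hs3)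
    · exact h23 (uY h2' h3' _ _ hm₂ hs2 hm₃ hs3)
    · exact h23 (uX h2' h3' _ _ hm₂ hs2 hm₃ hs3)
    · exact h13 (uY h1' h3' _ _ hm₁ hs1 hm₃ hs3)
    · exact h12 (uY h1' h2' _ _ hm₁ hs1 hm₂ hs2)
    · exact h12 (uY h1' h2' _ _ hm₁ hs1 hm₂ hs2)
  · rw [Set.Infinite.ncard hfin]
    omega

lemma induceAdj {s : Set W} (x y : ↥s) : (G.induce s).Adj x y ↔ G.Adj x.1 y.1 := by
  simp [SimpleGraph.induce]

lemma isCochain_induce (s : Set W) (h : IsCochain G) : IsCochain (G.induce s) := by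
  obtain ⟨X, Y, hdisj, hun, hX, hY, hchain⟩ := h
  refine ⟨Subtype.val ⁻¹' X, Subtype.val ⁻¹' Y, ?_, ?_, ?_, ?_, ?_⟩
  · rw [Set.disjoint_left]
    intro z hz hz'
    exact Set.disjoint_left.1 hdisj hz hz'
  · ext z
    simp only [Set.mem_union, Set.mem_preimage, Set.mem_univ, iff_true]
    have := Set.mem_univ z.1
    rw [← hun] at this
    exact this
  · intro x hx y hy hxy
    exact (induceAdj x y).2 (hX hx hy (fun h' => hxy (Subtype.ext h')))
  · intro x hx y hy hxy
    exact (induceAdj x y).2 (hY hx hy (fun h' => hxy (Subtype.ext h')))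
  · intro a ha b hb
    have hmem : ∀ (p q : ↥s), closedNbhd G p.1 ⊆ closedNbhd G q.1 →
        closedNbhd (G.induce s) p ⊆ closedNbhd (G.induce s) q := by
      intro p q hpq z hz
      have : z.1 ∈ closedNbhd G p.1 := by
        rcases mem_closedNbhd.1 hz with rfl | h'
        · exact self_mem_closedNbhd _
        · exact mem_closedNbhd.2 (Or.inr ((induceAdj p z).1 h'))
      rcases mem_closedNbhd.1 (hpq this) with h' | h'
      · exact mem_closedNbhd.2 (Or.inl (Subtype.ext h'))
      · exact mem_closedNbhd.2 (Or.inr ((induceAdj q z).2 h'))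
    rcases hchain a.1 ha b.1 hb with h | h
    · exact Or.inl (hmem a b h)
    · exact Or.inr (hmem b a h)

lemma chain_of_two_cliques {X Y : Set W} (hX : G.IsClique X) (hY : G.IsClique Y)
    (hun : X ∪ Y = Set.univ)
    (h4 : ¬ ∃ a b c d : W, a ≠ c ∧ b ≠ d ∧ G.Adj a b ∧ G.Adj b c ∧ G.Adj c d ∧
      G.Adj d a ∧ ¬G.Adj a c ∧ ¬G.Adj b d) :
    ∀ p ∈ X, ∀ q ∈ X,
      closedNbhd G p ⊆ closedNbhd G q ∨ closedNbhd G q ⊆ closedNbhd G p := by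
  intro p hp q hq
  by_contra h
  push_neg at h
  obtain ⟨h1, h2⟩ := h
  by_cases hpq : p = q
  · subst hpq; exact h1 (subset_refl _)
  have hadj : G.Adj p q := hX hp hq hpq
  obtain ⟨w, hw1, hw2⟩ := Set.not_subset.1 h1
  obtain ⟨z, hz1, hz2⟩ := Set.not_subset.1 h2
  have hpw : G.Adj p w := by
    rcases mem_closedNbhd.1 hw1 with rfl | h'
    · exact absurd (mem_closedNbhd.2 (Or.inr hadj.symm)) hw2
    · exact h'
  have hqz : G.Adj q z := by
    rcases mem_closedNbhd.1 hz1 with rfl | h'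
    · exact absurd (mem_closedNbhd.2 (Or.inr hadj)) hz2
    · exact h'
  have hwq : w ≠ q := fun h' => hw2 (mem_closedNbhd.2 (Or.inl h'))
  have hwnadj : ¬G.Adj q w := fun h' => hw2 (mem_closedNbhd.2 (Or.inr h'))
  have hzp : z ≠ p := fun h' => hz2 (mem_closedNbhd.2 (Or.inl h'))
  have hznadj : ¬G.Adj p z := fun h' => hz2 (mem_closedNbhd.2 (Or.inr h'))
  have hwz : w ≠ z := fun h' => hw2 (h' ▸ hz1)
  have hwY : w ∈ Y := by
    have hwX : w ∉ X := fun hwX => hwnadj (hX hq hwX (Ne.symm hwq)).symm.symm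
    have : w ∈ X ∪ Y := by rw [hun]; exact Set.mem_univ w
    exact this.resolve_left hwX
  have hzY : z ∈ Y := by
    have hzX : z ∉ X := fun hzX => hznadj (hX hp hzX (Ne.symm hzp))
    have : z ∈ X ∪ Y := by rw [hun]; exact Set.mem_univ z
    exact this.resolve_left hzX
  have hwzadj : G.Adj w z := hY hwY hzY hwz
  exact h4 ⟨w, p, q, z, hwq, Ne.symm hzp, hpw.symm, hadj, hqz, hwzadj.symm,
    fun h' => hwnadj h'.symm, hznadj⟩

/-- A `{3K₁, C₄, C₅}`-free graph is a cochain graph. -/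
lemma cochain_of_free
    (h3 : ¬ ∃ a b c : W, a ≠ b ∧ a ≠ c ∧ b ≠ c ∧ ¬G.Adj a b ∧ ¬G.Adj a c ∧ ¬G.Adj b c)
    (h4 : ¬ ∃ a b c d : W, a ≠ c ∧ b ≠ d ∧ G.Adj a b ∧ G.Adj b c ∧ G.Adj c d ∧
      G.Adj d a ∧ ¬G.Adj a c ∧ ¬G.Adj b d)
    (h5 : ¬ ∃ a b c d e : W, a ≠ c ∧ a ≠ d ∧ b ≠ d ∧ b ≠ e ∧ c ≠ e ∧ G.Adj a b ∧
      G.Adj b c ∧ G.Adj c d ∧ G.Adj d e ∧ G.Adj e a ∧ ¬G.Adj a c ∧ ¬G.Adj a d ∧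
      ¬G.Adj b d ∧ ¬G.Adj b e ∧ ¬G.Adj c e) :
    IsCochain G := by
  classical
  by_cases hcomp : ∀ x y : W, x ≠ y → G.Adj x y
  · refine ⟨∅, Set.univ, ?_, by simp, ?_, ?_, ?_⟩
    · exact Set.disjoint_left.2 (fun z hz => absurd hz (Set.notMem_empty z))
    · intro x hx; exact absurd hx (Set.notMem_empty x)
    · intro x _ y _ hxy; exact hcomp x y hxy
    · intro a ha; exact absurd ha (Set.notMem_empty a)
  push_neg at hcomp
  obtain ⟨a, b, hab, hnadj⟩ := hcomp
  have hanb : a ∉ closedNbhd G b := by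
    intro h'
    rcases mem_closedNbhd.1 h' with h'' | h''
    · exact hab h''
    · exact hnadj h''.symm
  have hbna : b ∉ closedNbhd G a := by
    intro h'
    rcases mem_closedNbhd.1 h' with h'' | h''
    · exact hab h''.symm
    · exact hnadj h''
  set A := {x : W | x ∈ closedNbhd G a ∧ x ∉ closedNbhd G b} with hAdef
  set B := {x : W | x ∈ closedNbhd G b ∧ x ∉ closedNbhd G a} with hBdef
  set C := {x : W | x ∈ closedNbhd G a ∧ x ∈ closedNbhd G b} with hCdef
  have haA : a ∈ A := ⟨self_mem_closedNbhd a, hanb⟩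
  have hbB : b ∈ B := ⟨self_mem_closedNbhd b, hbna⟩
  have hcover : ∀ x : W, x ∈ A ∨ x ∈ B ∨ x ∈ C := by
    intro x
    by_cases h1 : x ∈ closedNbhd G a
    · by_cases h2 : x ∈ closedNbhd G b
      · exact Or.inr (Or.inr ⟨h1, h2⟩)
      · exact Or.inl ⟨h1, h2⟩
    · by_cases h2 : x ∈ closedNbhd G b
      · exact Or.inr (Or.inl ⟨h2, h1⟩)
      · exact absurd ⟨a, b, x,
          hab,
          fun h' => h1 (mem_closedNbhd.2 (Or.inl h'.symm)),
          fun h' => h2 (mem_closedNbhd.2 (Or.inl h'.symm)),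
          hnadj,
          fun h' => h1 (mem_closedNbhd.2 (Or.inr h')),
          fun h' => h2 (mem_closedNbhd.2 (Or.inr h'))⟩ h3
  -- members of A ∖ {a} are adjacent to a, nonadjacent to b
  have hAfacts : ∀ x ∈ A, x ≠ a → (G.Adj a x ∧ x ≠ b ∧ ¬G.Adj b x) := by
    rintro x ⟨hx1, hx2⟩ hxa
    refine ⟨?_, ?_, ?_⟩
    · rcases mem_closedNbhd.1 hx1 with h' | h'
      · exact absurd h' hxa
      · exact h'
    · exact fun h' => hx2 (mem_closedNbhd.2 (Or.inl h'))
    · exact fun h' => hx2 (mem_closedNbhd.2 (Or.inr h'))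
  have hBfacts : ∀ x ∈ B, x ≠ b → (G.Adj b x ∧ x ≠ a ∧ ¬G.Adj a x) := by
    rintro x ⟨hx1, hx2⟩ hxb
    refine ⟨?_, ?_, ?_⟩
    · rcases mem_closedNbhd.1 hx1 with h' | h'
      · exact absurd h' hxb
      · exact h'
    · exact fun h' => hx2 (mem_closedNbhd.2 (Or.inl h'))
    · exact fun h' => hx2 (mem_closedNbhd.2 (Or.inr h'))
  have hCfacts : ∀ x ∈ C, (G.Adj a x ∧ G.Adj b x ∧ x ≠ a ∧ x ≠ b) := by
    rintro x ⟨hx1, hx2⟩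
    have hxa : x ≠ a := fun h' => hanb (h' ▸ hx2)
    have hxb : x ≠ b := fun h' => hbna (h' ▸ hx1)
    refine ⟨?_, ?_, hxa, hxb⟩
    · rcases mem_closedNbhd.1 hx1 with h' | h'
      · exact absurd h' hxa
      · exact h'
    · rcases mem_closedNbhd.1 hx2 with h' | h'
      · exact absurd h' hxb
      · exact h'
  have hAclique : G.IsClique A := by
    intro x hx y hy hxy
    by_contra hn
    by_cases hxa : x = a
    · subst hxa
      exact hn (hAfacts y hy (Ne.symm hxy)).1
    by_cases hya : y = a
    · subst hya
      exact hn ((hAfacts x hx hxy).1).symm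
    obtain ⟨_, hxb, hxnb⟩ := hAfacts x hx hxa
    obtain ⟨_, hyb, hynb⟩ := hAfacts y hy hya
    exact h3 ⟨x, y, b, hxy, hxb, hyb, hn, fun h' => hxnb h'.symm, fun h' => hynb h'.symm⟩
  have hBclique : G.IsClique B := by
    intro x hx y hy hxy
    by_contra hn
    by_cases hxb : x = b
    · subst hxb
      exact hn (hBfacts y hy (Ne.symm hxy)).1
    by_cases hyb : y = b
    · subst hyb
      exact hn ((hBfacts x hx hxy).1).symm
    obtain ⟨_, hxa, hxna⟩ := hBfacts x hx hxb
    obtain ⟨_, hya, hyna⟩ := hBfacts y hy hyb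
    exact h3 ⟨x, y, a, hxy, hxa, hya, hn, fun h' => hxna h'.symm, fun h' => hyna h'.symm⟩
  have hCclique : G.IsClique C := by
    intro x hx y hy hxy
    by_contra hn
    obtain ⟨hax, hbx, hxa, hxb⟩ := hCfacts x hx
    obtain ⟨hay, hby, hya, hyb⟩ := hCfacts y hy
    exact h4 ⟨a, x, b, y, hab, hxy, hax, hbx.symm, hby, hay.symm, hnadj, hn⟩
  have hCsplit : ∀ c' ∈ C, (∀ x ∈ A, G.Adj c' x) ∨ (∀ y ∈ B, G.Adj c' y) := by
    intro c' hc'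
    by_contra hcon
    push_neg at hcon
    obtain ⟨⟨x, hx, hcx⟩, ⟨y, hy, hcy⟩⟩ := hcon
    obtain ⟨hac', hbc', hc'a, hc'b⟩ := hCfacts c' hc'
    have hxa : x ≠ a := by
      rintro rfl
      exact hcx hac'.symm
    have hyb : y ≠ b := by
      rintro rfl
      exact hcy hbc'.symm
    obtain ⟨hax, hxb, hbnx⟩ := hAfacts x hx hxa
    obtain ⟨hby, hya, hany⟩ := hBfacts y hy hyb
    have hc'x : c' ≠ x := fun h' => hx.2 (h' ▸ hc'.2)
    have hc'y : c' ≠ y := fun h' => hy.2 (h' ▸ hc'.1)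
    by_cases hxy : G.Adj x y
    · exact h5 ⟨c', a, x, y, b, hc'x, hc'y, Ne.symm hya, hab, hxb,
        hac'.symm, hax, hxy, hby.symm, hbc', hcx, hcy, hany, hnadj,
        fun h' => hbnx h'.symm⟩
    · exact h3 ⟨x, y, c', fun h' => hx.2 (h' ▸ hy.1), hc'x.symm, hc'y.symm, hxy,
        fun h' => hcx h'.symm, fun h' => hcy h'.symm⟩
  set CA := {c' ∈ C | ∀ x ∈ A, G.Adj c' x} with hCAdef
  have hCAsub : CA ⊆ C := fun z hz => hz.1
  set X := A ∪ CA with hXdef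
  set Y := B ∪ (C \ CA) with hYdef
  have hAB : ∀ z, z ∈ A → z ∈ B → False := fun z hz hz' => hz.2 hz'.1
  have hAC : ∀ z, z ∈ A → z ∈ C → False := fun z hz hz' => hz.2 hz'.2
  have hBC : ∀ z, z ∈ B → z ∈ C → False := fun z hz hz' => hz.2 hz'.1
  have hXclique : G.IsClique X := by
    intro x hx y hy hxy
    rcases hx with hx | hx <;> rcases hy with hy | hy
    · exact hAclique hx hy hxy
    · exact (hy.2 x hx).symm
    · exact hx.2 y hy
    · exact hCclique hx.1 hy.1 hxy
  have hYclique : G.IsClique Y := by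
    intro x hx y hy hxy
    rcases hx with hx | hx <;> rcases hy with hy | hy
    · exact hBclique hx hy hxy
    · have : ∀ z ∈ B, G.Adj y z := by
        rcases hCsplit y hy.1 with h' | h'
        · exact absurd ⟨hy.1, h'⟩ hy.2
        · exact h'
      exact (this x hx).symm
    · have : ∀ z ∈ B, G.Adj x z := by
        rcases hCsplit x hx.1 with h' | h'
        · exact absurd ⟨hx.1, h'⟩ hx.2
        · exact h'
      exact this y hy
    · exact hCclique hx.1 hy.1 hxy
  have hunion : X ∪ Y = Set.univ := by
    ext z
    simp only [Set.mem_univ, iff_true]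
    rcases hcover z with h | h | h
    · exact Or.inl (Or.inl h)
    · exact Or.inr (Or.inl h)
    · by_cases h' : z ∈ CA
      · exact Or.inl (Or.inr h')
      · exact Or.inr (Or.inr ⟨h, h'⟩)
  have hdisj : Disjoint X Y := by
    rw [Set.disjoint_left]
    rintro z (hz | hz) (hz' | hz')
    · exact hAB z hz hz'
    · exact hAC z hz hz'.1
    · exact hBC z hz' (hCAsub hz)
    · exact hz'.2 hz
  exact ⟨X, Y, hdisj, hunion, hXclique, hYclique,
    chain_of_two_cliques hXclique hYclique hunion h4⟩

lemma singleton_cliqueModule (v : W) : IsCliqueModule G {v} := by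
  constructor
  · intro x hx y hy hxy
    rw [Set.mem_singleton_iff] at hx hy
    exact absurd (hx.trans hy.symm) hxy
  · intro z _
    by_cases h : G.Adj z v
    · exact Or.inl (fun x hx => Set.mem_singleton_iff.1 hx ▸ h)
    · exact Or.inr (fun x hx => Set.mem_singleton_iff.1 hx ▸ h)

lemma isolated_moplex {H : SimpleGraph W} {v : W} (h : ∀ w, ¬ H.Adj v w) :
    IsMoplex H {v} := by
  refine ⟨⟨v, rfl⟩, singleton_cliqueModule v, ?_, Or.inl ?_⟩
  · intro Z hsub hcm
    refine Set.eq_singleton_iff_unique_mem.2 ⟨hsub rfl, ?_⟩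
    intro w hw
    by_contra hne
    exact h w (hcm.1 (hsub rfl) hw (Ne.symm hne))
  · ext z
    simp only [Set.mem_empty_iff_false, iff_false]
    rintro ⟨_, x, hx, hadj⟩
    rw [Set.mem_singleton_iff] at hx
    exact h z (hx ▸ hadj).symm

/-- In an induced 4-cycle `a-b-c-d`, the singleton of `a` is a moplex. -/
lemma c4_singleton_moplex (G : SimpleGraph W) (a b c d : W) (s : Set W)
    (ha : a ∈ s) (hb : b ∈ s) (hc : c ∈ s) (hd : d ∈ s)
    (hall : ∀ w ∈ s, w = a ∨ w = b ∨ w = c ∨ w = d)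
    (hac' : a ≠ c) (hbd' : b ≠ d)
    (hab : G.Adj a b) (hbc : G.Adj b c) (hcd : G.Adj c d) (hda : G.Adj d a)
    (hac : ¬G.Adj a c) (hbd : ¬G.Adj b d) :
    IsMoplex (G.induce s) {(⟨a, ha⟩ : ↥s)} := by
  set H := G.induce s with hHdef
  set A : ↥s := ⟨a, ha⟩
  set B : ↥s := ⟨b, hb⟩
  set C : ↥s := ⟨c, hc⟩
  set D : ↥s := ⟨d, hd⟩
  have hcases : ∀ w : ↥s, w = A ∨ w = B ∨ w = C ∨ w = D := by
    intro w
    rcases hall w.1 w.2 with h | h | h | h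
    · exact Or.inl (Subtype.ext h)
    · exact Or.inr (Or.inl (Subtype.ext h))
    · exact Or.inr (Or.inr (Or.inl (Subtype.ext h)))
    · exact Or.inr (Or.inr (Or.inr (Subtype.ext h)))
  have adjA : ∀ w : ↥s, H.Adj A w → w = B ∨ w = D := by
    intro w hw
    rcases hcases w with rfl | rfl | rfl | rfl
    · exact absurd hw H.irrefl
    · exact Or.inl rfl
    · exact absurd ((induceAdj A C).1 hw) hac
    · exact Or.inr rfl
  have hAB : H.Adj A B := (induceAdj A B).2 hab
  have hBC : H.Adj B C := (induceAdj B C).2 hbc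
  have hCD : H.Adj C D := (induceAdj C D).2 hcd
  have hDA : H.Adj D A := (induceAdj D A).2 hda
  have hAC : ¬H.Adj A C := fun h' => hac ((induceAdj A C).1 h')
  have hBD : ¬H.Adj B D := fun h' => hbd ((induceAdj B D).1 h')
  have hACne : A ≠ C := fun h' => hac' (congrArg Subtype.val h')
  have hBDne : B ≠ D := fun h' => hbd' (congrArg Subtype.val h')
  have hsetN : setNbhd H {A} = {B, D} := by
    ext z
    constructor
    · rintro ⟨hz1, x, hx, hadj⟩
      rw [Set.mem_singleton_iff] at hx
      subst hx
      rcases adjA z hadj.symm with rfl | rfl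
      · exact Or.inl rfl
      · exact Or.inr rfl
    · rintro (rfl | rfl)
      · exact ⟨fun h' => hAB.ne (Set.mem_singleton_iff.1 h').symm, A, rfl, hAB.symm⟩
      · exact ⟨fun h' => hDA.ne (Set.mem_singleton_iff.1 h'), A, rfl, hDA⟩
  refine ⟨⟨A, rfl⟩, singleton_cliqueModule A, ?_, Or.inr ?_⟩
  · intro Z hsub hcm
    refine Set.eq_singleton_iff_unique_mem.2 ⟨hsub rfl, ?_⟩
    intro w hw
    rcases hcases w with rfl | rfl | rfl | rfl
    · rfl
    · exfalso
      by_cases hDZ : D ∈ Z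
      · exact hBD (hcm.1 hw hDZ hBDne)
      · rcases hcm.2 D hDZ with hall' | hnone
        · exact hBD (hall' B hw).symm
        · exact hnone A (hsub rfl) hDA
    · exact absurd (hcm.1 (hsub rfl) hw hACne) hAC
    · exfalso
      by_cases hBZ : B ∈ Z
      · exact hBD (hcm.1 hBZ hw hBDne)
      · rcases hcm.2 B hBZ with hall' | hnone
        · exact hBD (hall' D hw)
        · exact hnone A (hsub rfl) hAB.symm
  · rw [hsetN]
    refine ⟨A, C, hACne, ⟨hAC, ?_, ?_, ?_⟩, ?_⟩
    · rintro (h' | h')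
      · exact hab.ne (congrArg Subtype.val h')
      · exact hda.ne (congrArg Subtype.val h').symm
    · rintro (h' | h')
      · exact hbc.ne' (congrArg Subtype.val h')
      · exact hcd.ne (congrArg Subtype.val h')
    · rintro ⟨p, hp⟩
      obtain ⟨z, h, q, rfl⟩ := p.exists_eq_cons_of_ne hACne
      rcases adjA z h with rfl | rfl
      · exact hp B (by simp [SimpleGraph.Walk.support_cons, q.start_mem_support]) (Or.inl rfl)
      · exact hp D (by simp [SimpleGraph.Walk.support_cons, q.start_mem_support]) (Or.inr rfl)
    · rintro T hT ⟨_, hAT, hCT, hr⟩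
      have hTsub : T ⊆ {B, D} := hT.1
      have : B ∉ T ∨ D ∉ T := by
        by_contra hcon
        push_neg at hcon
        exact hT.2 (fun z hz => by rcases hz with rfl | rfl; exacts [hcon.1, hcon.2])
      rcases this with hBT | hDT
      · refine hr ⟨SimpleGraph.Walk.cons hAB (SimpleGraph.Walk.cons hBC SimpleGraph.Walk.nil), ?_⟩
        intro x hx
        simp only [SimpleGraph.Walk.support_cons, SimpleGraph.Walk.support_nil,
          List.mem_cons, List.not_mem_nil, or_false] at hx
        rcases hx with rfl | rfl | rfl
        · exact hAT
        · exact hBT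
        · exact hCT
      · refine hr ⟨SimpleGraph.Walk.cons hDA.symm (SimpleGraph.Walk.cons hCD.symm SimpleGraph.Walk.nil), ?_⟩
        intro x hx
        simp only [SimpleGraph.Walk.support_cons, SimpleGraph.Walk.support_nil,
          List.mem_cons, List.not_mem_nil, or_false] at hx
        rcases hx with rfl | rfl | rfl
        · exact hAT
        · exact hDT
        · exact hCT

/-- In an induced 5-cycle `a-b-c-d-e`, the singleton of `a` is a moplex. -/
lemma c5_singleton_moplex (G : SimpleGraph W) (a b c d e : W) (s : Set W)
    (ha : a ∈ s) (hb : b ∈ s) (hc : c ∈ s) (hd : d ∈ s) (he : e ∈ s)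
    (hall : ∀ w ∈ s, w = a ∨ w = b ∨ w = c ∨ w = d ∨ w = e)
    (hac' : a ≠ c) (had' : a ≠ d) (hbd' : b ≠ d) (hbe' : b ≠ e) (hce' : c ≠ e)
    (hab : G.Adj a b) (hbc : G.Adj b c) (hcd : G.Adj c d) (hde : G.Adj d e)
    (hea : G.Adj e a)
    (hac : ¬G.Adj a c) (had : ¬G.Adj a d) (hbd : ¬G.Adj b d) (hbe : ¬G.Adj b e)
    (hce : ¬G.Adj c e) :
    IsMoplex (G.induce s) {(⟨a, ha⟩ : ↥s)} := by
  set H := G.induce s with hHdef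
  set A : ↥s := ⟨a, ha⟩
  set B : ↥s := ⟨b, hb⟩
  set C : ↥s := ⟨c, hc⟩
  set D : ↥s := ⟨d, hd⟩
  set E : ↥s := ⟨e, he⟩
  have hcases : ∀ w : ↥s, w = A ∨ w = B ∨ w = C ∨ w = D ∨ w = E := by
    intro w
    rcases hall w.1 w.2 with h | h | h | h | h
    · exact Or.inl (Subtype.ext h)
    · exact Or.inr (Or.inl (Subtype.ext h))
    · exact Or.inr (Or.inr (Or.inl (Subtype.ext h)))
    · exact Or.inr (Or.inr (Or.inr (Or.inl (Subtype.ext h))))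
    · exact Or.inr (Or.inr (Or.inr (Or.inr (Subtype.ext h))))
  have adjA : ∀ w : ↥s, H.Adj A w → w = B ∨ w = E := by
    intro w hw
    rcases hcases w with rfl | rfl | rfl | rfl | rfl
    · exact absurd hw H.irrefl
    · exact Or.inl rfl
    · exact absurd ((induceAdj A C).1 hw) hac
    · exact absurd ((induceAdj A D).1 hw) had
    · exact Or.inr rfl
  have hAB : H.Adj A B := (induceAdj A B).2 hab
  have hBC : H.Adj B C := (induceAdj B C).2 hbc
  have hCD : H.Adj C D := (induceAdj C D).2 hcd
  have hDE : H.Adj D E := (induceAdj D E).2 hde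
  have hEA : H.Adj E A := (induceAdj E A).2 hea
  have hAC : ¬H.Adj A C := fun h' => hac ((induceAdj A C).1 h')
  have hACne : A ≠ C := fun h' => hac' (congrArg Subtype.val h')
  have hsetN : setNbhd H {A} = {B, E} := by
    ext z
    constructor
    · rintro ⟨hz1, x, hx, hadj⟩
      rw [Set.mem_singleton_iff] at hx
      subst hx
      rcases adjA z hadj.symm with rfl | rfl
      · exact Or.inl rfl
      · exact Or.inr rfl
    · rintro (rfl | rfl)
      · exact ⟨fun h' => hAB.ne (Set.mem_singleton_iff.1 h').symm, A, rfl, hAB.symm⟩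
      · exact ⟨fun h' => hEA.ne (Set.mem_singleton_iff.1 h'), A, rfl, hEA⟩
  refine ⟨⟨A, rfl⟩, singleton_cliqueModule A, ?_, Or.inr ?_⟩
  · intro Z hsub hcm
    refine Set.eq_singleton_iff_unique_mem.2 ⟨hsub rfl, ?_⟩
    intro w hw
    rcases hcases w with rfl | rfl | rfl | rfl | rfl
    · rfl
    · exfalso
      by_cases hCZ : C ∈ Z
      · exact hAC (hcm.1 (hsub rfl) hCZ hACne)
      · rcases hcm.2 C hCZ with hall' | hnone
        · exact hac ((induceAdj C A).1 (hall' A (hsub rfl))).symm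
        · exact hnone B hw ((induceAdj C B).2 hbc.symm)
    · exact absurd (hcm.1 (hsub rfl) hw hACne) hAC
    · exact absurd ((induceAdj A D).1
        (hcm.1 (hsub rfl) hw (fun h' => had' (congrArg Subtype.val h')))) had
    · exfalso
      by_cases hDZ : D ∈ Z
      · exact had ((induceAdj A D).1 (hcm.1 (hsub rfl) hDZ
          (fun h' => had' (congrArg Subtype.val h'))))
      · rcases hcm.2 D hDZ with hall' | hnone
        · exact had ((induceAdj D A).1 (hall' A (hsub rfl))).symm
        · exact hnone E hw ((induceAdj D E).2 hde)
  · rw [hsetN]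
    refine ⟨A, C, hACne, ⟨hAC, ?_, ?_, ?_⟩, ?_⟩
    · rintro (h' | h')
      · exact hab.ne (congrArg Subtype.val h')
      · exact hea.ne (congrArg Subtype.val h').symm
    · rintro (h' | h')
      · exact hbc.ne' (congrArg Subtype.val h')
      · exact hce' (congrArg Subtype.val h')
    · rintro ⟨p, hp⟩
      obtain ⟨z, h, q, rfl⟩ := p.exists_eq_cons_of_ne hACne
      rcases adjA z h with rfl | rfl
      · exact hp B (by simp [SimpleGraph.Walk.support_cons, q.start_mem_support]) (Or.inl rfl)
      · exact hp E (by simp [SimpleGraph.Walk.support_cons, q.start_mem_support]) (Or.inr rfl)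
    · rintro T hT ⟨_, hAT, hCT, hr⟩
      have hTsub : T ⊆ {B, E} := hT.1
      have : B ∉ T ∨ E ∉ T := by
        by_contra hcon
        push_neg at hcon
        exact hT.2 (fun z hz => by rcases hz with rfl | rfl; exacts [hcon.1, hcon.2])
      rcases this with hBT | hET
      · refine hr ⟨SimpleGraph.Walk.cons hAB (SimpleGraph.Walk.cons hBC SimpleGraph.Walk.nil), ?_⟩
        intro x hx
        simp only [SimpleGraph.Walk.support_cons, SimpleGraph.Walk.support_nil,
          List.mem_cons, List.not_mem_nil, or_false] at hx
        rcases hx with rfl | rfl | rfl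
        · exact hAT
        · exact hBT
        · exact hCT
      · refine hr ⟨SimpleGraph.Walk.cons hEA.symm (SimpleGraph.Walk.cons hDE.symm
          (SimpleGraph.Walk.cons hCD.symm SimpleGraph.Walk.nil)), ?_⟩
        intro x hx
        simp only [SimpleGraph.Walk.support_cons, SimpleGraph.Walk.support_nil,
          List.mem_cons, List.not_mem_nil, or_false] at hx
        rcases hx with rfl | rfl | rfl | rfl
        · exact hAT
        · exact hET
        · intro hDT
          rcases hTsub hDT with h' | h'
          · exact hbd' (congrArg Subtype.val h').symm
          · exact hde.ne (congrArg Subtype.val h')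
        · exact hCT

end Aux

/-- Every induced subgraph of `G` has at most two moplexes iff `G` is a cochain graph. -/
theorem induced_twoMoplex_iff_cochain {V : Type*} [Fintype V] (G : SimpleGraph V) :
    (∀ s : Set V, {X : Set s | IsMoplex (G.induce s) X}.ncard ≤ 2) ↔
      IsCochain G := by
  constructor
  · intro h
    by_cases hc3 : ∃ a b c : V, a ≠ b ∧ a ≠ c ∧ b ≠ c ∧ ¬G.Adj a b ∧ ¬G.Adj a c ∧ ¬G.Adj b c
    · exfalso
      obtain ⟨x, y, z, hxy, hxz, hyz, nxy, nxz, nyz⟩ := hc3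
      set s : Set V := {x, y, z} with hsdef
      have hxs : x ∈ s := by simp [hsdef]
      have hys : y ∈ s := by simp [hsdef]
      have hzs : z ∈ s := by simp [hsdef]
      have hall : ∀ w ∈ s, w = x ∨ w = y ∨ w = z := by
        intro w hw; simpa [hsdef] using hw
      have mX : IsMoplex (G.induce s) {(⟨x, hxs⟩ : ↥s)} := by
        apply isolated_moplex
        intro w hadj
        have hadj' := (induceAdj (⟨x, hxs⟩ : ↥s) w).1 hadj
        rcases hall w.1 w.2 with h' | h' | h'
        · rw [h'] at hadj'; exact G.irrefl hadj'
        · rw [h'] at hadj'; exact nxy hadj'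
        · rw [h'] at hadj'; exact nxz hadj'
      have mY : IsMoplex (G.induce s) {(⟨y, hys⟩ : ↥s)} := by
        apply isolated_moplex
        intro w hadj
        have hadj' := (induceAdj (⟨y, hys⟩ : ↥s) w).1 hadj
        rcases hall w.1 w.2 with h' | h' | h'
        · rw [h'] at hadj'; exact nxy hadj'.symm
        · rw [h'] at hadj'; exact G.irrefl hadj'
        · rw [h'] at hadj'; exact nyz hadj'
      have mZ : IsMoplex (G.induce s) {(⟨z, hzs⟩ : ↥s)} := by
        apply isolated_moplex
        intro w hadj
        have hadj' := (induceAdj (⟨z, hzs⟩ : ↥s) w).1 hadj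
        rcases hall w.1 w.2 with h' | h' | h'
        · rw [h'] at hadj'; exact nxz hadj'.symm
        · rw [h'] at hadj'; exact nyz hadj'.symm
        · rw [h'] at hadj'; exact G.irrefl hadj'
      have h2 := h s
      have h3 : 2 < {X : Set s | IsMoplex (G.induce s) X}.ncard :=
        (Set.two_lt_ncard (Set.toFinite _)).2
          ⟨_, mX, _, mY, _, mZ,
           fun h' => hxy (congrArg Subtype.val (Set.singleton_eq_singleton_iff.1 h')),
           fun h' => hxz (congrArg Subtype.val (Set.singleton_eq_singleton_iff.1 h')),
           fun h' => hyz (congrArg Subtype.val (Set.singleton_eq_singleton_iff.1 h'))⟩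
      omega
    by_cases hc4 : ∃ a b c d : V, a ≠ c ∧ b ≠ d ∧ G.Adj a b ∧ G.Adj b c ∧ G.Adj c d ∧
        G.Adj d a ∧ ¬G.Adj a c ∧ ¬G.Adj b d
    · exfalso
      obtain ⟨a, b, c, d, hac', hbd', hab, hbc, hcd, hda, hac, hbd⟩ := hc4
      set s : Set V := {a, b, c, d} with hsdef
      have has : a ∈ s := by simp [hsdef]
      have hbs : b ∈ s := by simp [hsdef]
      have hcs : c ∈ s := by simp [hsdef]
      have hds : d ∈ s := by simp [hsdef]
      have hall : ∀ w ∈ s, w = a ∨ w = b ∨ w = c ∨ w = d := by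
        intro w hw; simpa [hsdef] using hw
      have hall2 : ∀ w ∈ s, w = b ∨ w = c ∨ w = d ∨ w = a := by
        intro w hw; rcases hall w hw with h' | h' | h' | h' <;> tauto
      have hall3 : ∀ w ∈ s, w = c ∨ w = d ∨ w = a ∨ w = b := by
        intro w hw; rcases hall w hw with h' | h' | h' | h' <;> tauto
      have mA := c4_singleton_moplex G a b c d s has hbs hcs hds hall
        hac' hbd' hab hbc hcd hda hac hbd
      have mB := c4_singleton_moplex G b c d a s hbs hcs hds has hall2
        hbd' (Ne.symm hac') hbc hcd hda hab hbd (fun h' => hac h'.symm)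
      have mC := c4_singleton_moplex G c d a b s hcs hds has hbs hall3
        (Ne.symm hac') (Ne.symm hbd') hcd hda hab hbc
        (fun h' => hac h'.symm) (fun h' => hbd h'.symm)
      have h2 := h s
      have h3 : 2 < {X : Set s | IsMoplex (G.induce s) X}.ncard :=
        (Set.two_lt_ncard (Set.toFinite _)).2
          ⟨_, mA, _, mB, _, mC,
           fun h' => hab.ne (congrArg Subtype.val (Set.singleton_eq_singleton_iff.1 h')),
           fun h' => hac' (congrArg Subtype.val (Set.singleton_eq_singleton_iff.1 h')),
           fun h' => hbc.ne (congrArg Subtype.val (Set.singleton_eq_singleton_iff.1 h'))⟩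
      omega
    by_cases hc5 : ∃ a b c d e : V, a ≠ c ∧ a ≠ d ∧ b ≠ d ∧ b ≠ e ∧ c ≠ e ∧ G.Adj a b ∧
        G.Adj b c ∧ G.Adj c d ∧ G.Adj d e ∧ G.Adj e a ∧ ¬G.Adj a c ∧ ¬G.Adj a d ∧
        ¬G.Adj b d ∧ ¬G.Adj b e ∧ ¬G.Adj c e
    · exfalso
      obtain ⟨a, b, c, d, e, hac', had', hbd', hbe', hce', hab, hbc, hcd, hde, hea,
        hac, had, hbd, hbe, hce⟩ := hc5
      set s : Set V := {a, b, c, d, e} with hsdef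
      have has : a ∈ s := by simp [hsdef]
      have hbs : b ∈ s := by simp [hsdef]
      have hcs : c ∈ s := by simp [hsdef]
      have hds : d ∈ s := by simp [hsdef]
      have hes : e ∈ s := by simp [hsdef]
      have hall : ∀ w ∈ s, w = a ∨ w = b ∨ w = c ∨ w = d ∨ w = e := by
        intro w hw; simpa [hsdef] using hw
      have hall2 : ∀ w ∈ s, w = b ∨ w = c ∨ w = d ∨ w = e ∨ w = a := by
        intro w hw; rcases hall w hw with h' | h' | h' | h' | h' <;> tauto
      have hall3 : ∀ w ∈ s, w = c ∨ w = d ∨ w = e ∨ w = a ∨ w = b := by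
        intro w hw; rcases hall w hw with h' | h' | h' | h' | h' <;> tauto
      have mA := c5_singleton_moplex G a b c d e s has hbs hcs hds hes hall
        hac' had' hbd' hbe' hce' hab hbc hcd hde hea hac had hbd hbe hce
      have mB := c5_singleton_moplex G b c d e a s hbs hcs hds hes has hall2
        hbd' hbe' hce' (Ne.symm hac') (Ne.symm had') hbc hcd hde hea hab
        hbd hbe hce (fun h' => hac h'.symm) (fun h' => had h'.symm)
      have mC := c5_singleton_moplex G c d e a b s hcs hds hes has hbs hall3
        hce' (Ne.symm hac') (Ne.symm had') (Ne.symm hbd') (Ne.symm hbe')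
        hcd hde hea hab hbc
        hce (fun h' => hac h'.symm) (fun h' => had h'.symm)
        (fun h' => hbd h'.symm) (fun h' => hbe h'.symm)
      have h2 := h s
      have h3 : 2 < {X : Set s | IsMoplex (G.induce s) X}.ncard :=
        (Set.two_lt_ncard (Set.toFinite _)).2
          ⟨_, mA, _, mB, _, mC,
           fun h' => hab.ne (congrArg Subtype.val (Set.singleton_eq_singleton_iff.1 h')),
           fun h' => hac' (congrArg Subtype.val (Set.singleton_eq_singleton_iff.1 h')),
           fun h' => hbc.ne (congrArg Subtype.val (Set.singleton_eq_singleton_iff.1 h'))⟩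
      omega
    exact cochain_of_free hc3 hc4 hc5
  · intro hc s
    exact ncard_moplexes_le_two (isCochain_induce s hc)
end MoplexPaper
end

section
/- Let G be a non-complete graph with exactly two moplexes U and W, and let x, y be non-adjacent vertices. Then either U lies in the same component of G−S as x for every minimal x,y-separator S, or U lies in the same component of G−S as y for every minimal x,y-separator S. -/
open SimpleGraph

namespace MoplexPaper

variable {V : Type*}

/-! By Berry–Bordat, every full component of a minimal separator contains a moplex, so with
exactly two moplexes each minimal `x,y`-separator has `U` on one side and `W` on the other.
If `U` lay on the `y`-side of `S₁` and `W` on the `y`-side of `S₂`, the neighbourhood of the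
component of `x` in `G - (S₁ ∪ S₂)` would contain a minimal `x,y`-separator with both `U` and
`W` on its `y`-side, leaving no moplex on its `x`-side.

Berry–Bordat goes by induction on the `x`-side `C` of `S`: if `C` is not a clique module, then
either some `s ∈ S` misses some `c ∈ C`, or `S ⊆ N(a)` for some `a ∈ C` not adjacent to some
`b ∈ C`. With `A = {s} ∪ (y-side)`, resp. `A = {a}`, the neighbourhood of the component of
`c`, resp. `b`, in `G - N[A]` is a minimal separator with a smaller full component inside `C`. -/

section Reach

variable {G : SimpleGraph V} {S T : Set V} {u v w : V}

lemma ReachOutside.refl (h : v ∉ S) : ReachOutside G S v v :=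
  ⟨Walk.nil, by simpa using h⟩

lemma ReachOutside.symm (h : ReachOutside G S u v) : ReachOutside G S v u := by
  obtain ⟨p, hp⟩ := h
  exact ⟨p.reverse, fun z hz => hp z (by simpa using hz)⟩

lemma ReachOutside.trans (h : ReachOutside G S u v) (h' : ReachOutside G S v w) :
    ReachOutside G S u w := by
  obtain ⟨p, hp⟩ := h
  obtain ⟨q, hq⟩ := h'
  exact ⟨p.append q, fun z hz => ((Walk.mem_support_append_iff p q).mp hz).elim (hp z) (hq z)⟩

lemma ReachOutside.of_adj (h : G.Adj u v) (hu : u ∉ S) (hv : v ∉ S) : ReachOutside G S u v :=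
  ⟨h.toWalk, by simp [hu, hv]⟩

lemma ReachOutside.left_notMem (h : ReachOutside G S u v) : u ∉ S :=
  h.elim fun p hp => hp u p.start_mem_support

lemma ReachOutside.mono (hTS : T ⊆ S) (h : ReachOutside G S u v) : ReachOutside G T u v :=
  h.elim fun p hp => ⟨p, fun z hz hzT => hp z hz (hTS hzT)⟩

end Reach

/-- The vertex set of the component of `x` in `G - S` (empty if `x ∈ S`). -/
def side (G : SimpleGraph V) (S : Set V) (x : V) : Set V :=
  {v | ReachOutside G S v x}

section Side

variable {G : SimpleGraph V} {S T K P : Set V} {x y v c : V}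

lemma mem_side_self (hx : x ∉ S) : x ∈ side G S x :=
  ReachOutside.refl hx

lemma notMem_of_mem_side (h : v ∈ side G S x) : v ∉ S :=
  ReachOutside.left_notMem h

lemma side_anti (hST : S ⊆ T) : side G T x ⊆ side G S x :=
  fun _ h => ReachOutside.mono hST h

lemma side_subset_side_of_mem (hv : v ∈ side G S x) : side G S v ⊆ side G S x :=
  fun _ h => ReachOutside.trans h hv

lemma mem_side_of_adj (hc : c ∈ side G S x) (h : G.Adj v c) (hv : v ∉ S) : v ∈ side G S x :=
  (ReachOutside.of_adj h hv (notMem_of_mem_side hc)).trans hc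

lemma side_subset_of_adj_closed (hv : v ∈ P)
    (hP : ∀ a b, G.Adj a b → b ∈ P → a ∉ T → a ∈ P) : side G T v ⊆ P := by
  rintro u ⟨p, hp⟩
  induction p with
  | nil => exact hv
  | cons h q ih => exact hP _ _ h (ih hv fun z hz => hp z (by simp [hz])) (hp _ (by simp))

lemma side_subset_side_of_disjoint (h : Disjoint T (side G S y)) : side G S y ⊆ side G T y := by
  classical
  rintro u ⟨p, hp⟩
  refine ⟨p, fun z hz hzT => Set.disjoint_left.mp h hzT ?_⟩
  exact ⟨p.dropUntil z hz, fun w hw => hp w (p.support_dropUntil_subset_support hz hw)⟩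

lemma setNbhd_side_subset : setNbhd G (side G S v) ⊆ S := by
  rintro t ⟨ht, k, hk, htk⟩
  by_contra htS
  exact ht (mem_side_of_adj hk htk htS)

lemma side_setNbhd_subset (hv : v ∈ K) : side G (setNbhd G K) v ⊆ K :=
  side_subset_of_adj_closed hv fun a b hab hb ha => by
    by_contra haK
    exact ha ⟨haK, b, hb, hab⟩

end Side

section Separator

variable {G : SimpleGraph V} {S K : Set V} {x y s : V}

lemma IsSeparator.symm (h : IsSeparator G x y S) : IsSeparator G y x S :=
  ⟨fun hyx => h.1 hyx.symm, h.2.2.1, h.2.1, fun hr => h.2.2.2 hr.symm⟩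

lemma IsMinSeparator.symm (h : IsMinSeparator G x y S) : IsMinSeparator G y x S :=
  ⟨h.1.symm, fun T hT hsep => h.2 T hT hsep.symm⟩

lemma IsSeparator.ne (h : IsSeparator G x y S) : x ≠ y := by
  rintro rfl
  exact h.2.2.2 (ReachOutside.refl h.2.1)

lemma IsSeparator.disjoint_side (h : IsSeparator G x y S) :
    Disjoint (side G S x) (side G S y) :=
  Set.disjoint_left.mpr fun _ hx hy => h.2.2.2 (ReachOutside.trans (ReachOutside.symm hx) hy)

lemma IsSeparator.disjoint_setNbhd_side (h : IsSeparator G x y S) (hK : K ⊆ side G S x) :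
    Disjoint (setNbhd G K) (side G S y) :=
  Set.disjoint_left.mpr fun _ ⟨_, _, hk, htk⟩ ht =>
    Set.disjoint_left.mp h.disjoint_side (mem_side_of_adj (hK hk) htk (notMem_of_mem_side ht)) ht

lemma IsSeparator.isMinSeparator_of_full (hS : IsSeparator G x y S)
    (hfull : ∀ s ∈ S, (∃ a ∈ side G S x, G.Adj s a) ∧ ∃ b ∈ side G S y, G.Adj s b) :
    IsMinSeparator G x y S := by
  refine ⟨hS, fun T hTS hT => ?_⟩
  obtain ⟨s, hsS, hsT⟩ := Set.exists_of_ssubset hTS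
  obtain ⟨⟨a, ha, hsa⟩, b, hb, hsb⟩ := hfull s hsS
  have ha' : a ∈ side G T x := side_anti hTS.subset ha
  have hb' : b ∈ side G T y := side_anti hTS.subset hb
  exact hT.2.2.2 <| (ReachOutside.symm ha').trans <|
    (ReachOutside.of_adj hsa.symm (notMem_of_mem_side ha') hsT).trans <|
    (ReachOutside.of_adj hsb hsT (notMem_of_mem_side hb')).trans hb'

lemma IsMinSeparator.exists_adj_mem_side (hS : IsMinSeparator G x y S) (hs : s ∈ S) :
    ∃ a ∈ side G S x, G.Adj s a := by
  by_contra! hno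
  have hsub : side G (S \ {s}) x ⊆ side G S x :=
    side_subset_of_adj_closed (mem_side_self hS.1.2.1) fun a b hab hb ha => by
      obtain rfl | has := eq_or_ne a s
      · exact absurd hab (hno b hb)
      · exact mem_side_of_adj hb hab fun haS => ha ⟨haS, has⟩
  refine hS.2 (S \ {s}) (Set.sdiff_singleton_ssubset.mpr hs)
    ⟨hS.1.1, fun h => hS.1.2.1 h.1, fun h => hS.1.2.2.1 h.1, fun hr => ?_⟩
  exact hS.1.2.2.2 (ReachOutside.symm (hsub (ReachOutside.symm hr)))

lemma IsSeparator.exists_isMinSeparator_subset [Finite V] (h : IsSeparator G x y S) :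
    ∃ T ⊆ S, IsMinSeparator G x y T := by
  obtain ⟨T, hTS, hT, hmin⟩ := exists_minimal_le_of_wellFoundedLT (IsSeparator G x y) S h
  exact ⟨T, hTS, hT, fun T' hT' hsep => hT'.2 (hmin hsep hT'.le)⟩

end Separator

def closedSetNbhd (G : SimpleGraph V) (A : Set V) : Set V :=
  {v | v ∈ A ∨ ∃ a ∈ A, G.Adj v a}

section BerryBordat

variable {G : SimpleGraph V} {S A : Set V} {x y v w s c : V}

/-- For `A` connected and `v ∉ N[A]`, the component `K` of `v` in `G - N[A]` and the
component of `A` in `G - N(K)` are both full components of `N(K)`. -/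
lemma isMinSeparator_setNbhd_side (hy : y ∈ A) (hA : ∀ a ∈ A, ReachOutside G Aᶜ a y)
    (hv : v ∉ closedSetNbhd G A) :
    IsMinSeparator G v y (setNbhd G (side G (closedSetNbhd G A) v)) := by
  set K := side G (closedSetNbhd G A) v
  have hvK : v ∈ K := mem_side_self hv
  have hAK : Disjoint A (setNbhd G K) := Set.disjoint_left.mpr fun a ha ⟨_, _, hk, hak⟩ =>
    notMem_of_mem_side hk (Or.inr ⟨a, ha, hak.symm⟩)
  have hyK : y ∉ side G (setNbhd G K) v := fun h =>
    notMem_of_mem_side (side_setNbhd_subset hvK h) (Or.inl hy)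
  refine IsSeparator.isMinSeparator_of_full ⟨fun hvy => hv (Or.inr ⟨y, hy, hvy⟩),
    fun h => h.1 hvK, Set.disjoint_left.mp hAK hy, fun hr => hyK (ReachOutside.symm hr)⟩
    fun t ht => ⟨?_, ?_⟩
  · obtain ⟨-, k, hk, htk⟩ := ht
    exact ⟨k, side_anti setNbhd_side_subset hk, htk⟩
  · obtain ⟨a, ha, hta⟩ :=
      (setNbhd_side_subset ht : t ∈ closedSetNbhd G A).resolve_left (Set.disjoint_right.mp hAK ht)
    exact ⟨a, side_anti (Set.subset_compl_iff_disjoint_left.mpr hAK) (hA a ha), hta⟩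

lemma exists_isMinSeparator_side_ssubset (hy : y ∈ A) (hA : ∀ a ∈ A, ReachOutside G Aᶜ a y)
    (hSA : S ⊆ closedSetNbhd G A) (hv : v ∈ side G S x) (hvA : v ∉ closedSetNbhd G A)
    (hw : w ∈ side G S x) (hwA : w ∈ closedSetNbhd G A) :
    ∃ T, IsMinSeparator G v y T ∧ side G T v ⊂ side G S x := by
  set K := side G (closedSetNbhd G A) v
  have hK : K ⊆ side G S x := (side_anti hSA).trans (side_subset_side_of_mem hv)
  have hsub : side G (setNbhd G K) v ⊆ K := side_setNbhd_subset (mem_side_self hvA)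
  refine ⟨_, isMinSeparator_setNbhd_side hy hA hvA, (hsub.trans hK).ssubset_of_not_subset ?_⟩
  exact fun h => notMem_of_mem_side (hsub (h hw)) hwA

lemma IsMinSeparator.exists_side_ssubset_of_not_adj (hS : IsMinSeparator G x y S) (hs : s ∈ S)
    (hc : c ∈ side G S x) (hsc : ¬ G.Adj s c) :
    ∃ T, IsMinSeparator G c y T ∧ side G T c ⊂ side G S x := by
  set D := side G S y
  have hdisj := hS.1.disjoint_side
  have hconn : ∀ a ∈ insert s D, ReachOutside G (insert s D)ᶜ a y := by
    have hD : D ⊆ side G (insert s D)ᶜ y :=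
      side_subset_side_of_disjoint (Set.disjoint_compl_left_iff_subset.mpr (Set.subset_insert s D))
    rintro a (rfl | ha)
    · obtain ⟨d, hd, hsd⟩ := hS.symm.exists_adj_mem_side hs
      exact (ReachOutside.of_adj hsd (not_not.mpr (Set.mem_insert _ _))
        (not_not.mpr (Or.inr hd))).trans (hD hd)
    · exact hD ha
  have hSA : S ⊆ closedSetNbhd G (insert s D) := fun t ht => by
    obtain ⟨d, hd, htd⟩ := hS.symm.exists_adj_mem_side ht
    exact Or.inr ⟨d, Or.inr hd, htd⟩
  obtain ⟨c', hc', hsc'⟩ := hS.exists_adj_mem_side hs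
  refine exists_isMinSeparator_side_ssubset (Or.inr (mem_side_self hS.1.2.2.1)) hconn hSA hc ?_ hc'
    (Or.inr ⟨s, Or.inl rfl, hsc'.symm⟩)
  rintro ((rfl | hcD) | ⟨a, rfl | haD, hca⟩)
  · exact notMem_of_mem_side hc hs
  · exact Set.disjoint_left.mp hdisj hc hcD
  · exact hsc hca.symm
  · exact Set.disjoint_left.mp hdisj (mem_side_of_adj hc hca.symm (notMem_of_mem_side haD)) haD

lemma IsMinSeparator.subset_side_of_isCliqueModule (hS : IsMinSeparator G x y S) {Y : Set V}
    (hY : IsCliqueModule G Y) (hcY : c ∈ Y) (hc : c ∈ side G S x) : Y ⊆ side G S x := by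
  intro z hz
  obtain rfl | hzc := eq_or_ne z c
  · exact hc
  by_cases hzS : z ∈ S
  · obtain ⟨b, hb, hzb⟩ := hS.symm.exists_adj_mem_side hzS
    -- whether or not `b` lies in the module `Y`, it is adjacent to `c`
    have hbc : G.Adj b c := by
      by_cases hbY : b ∈ Y
      · exact hY.1 hbY hcY fun h => Set.disjoint_left.mp hS.1.disjoint_side hc (h ▸ hb)
      · exact ((hY.2 b hbY).resolve_right fun h => h z hz hzb.symm) c hcY
    exact (Set.disjoint_left.mp hS.1.disjoint_side
      (mem_side_of_adj hc hbc (notMem_of_mem_side hb)) hb).elim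
  · exact mem_side_of_adj hc (hY.1 hz hcY hzc) hzS

lemma IsMinSeparator.isMoplex_side (hS : IsMinSeparator G x y S)
    (hC : IsCliqueModule G (side G S x)) : IsMoplex G (side G S x) := by
  have hx : x ∈ side G S x := mem_side_self hS.1.2.1
  have hN : setNbhd G (side G S x) = S := by
    refine setNbhd_side_subset.antisymm fun s hs => ?_
    obtain ⟨a, ha, hsa⟩ := hS.exists_adj_mem_side hs
    exact ⟨fun h => notMem_of_mem_side h hs, a, ha, hsa⟩
  refine ⟨⟨x, hx⟩, hC, fun Y hCY hY =>
    (hS.subset_side_of_isCliqueModule hY (hCY hx) hx).antisymm hCY, Or.inr ?_⟩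
  rw [hN]
  exact ⟨x, y, hS.1.ne, hS⟩

lemma IsMinSeparator.exists_side_ssubset (hS : IsMinSeparator G x y S)
    (hC : ¬ IsCliqueModule G (side G S x)) :
    ∃ v w T, IsMinSeparator G v w T ∧ side G T v ⊂ side G S x := by
  by_cases hSC : ∃ s ∈ S, ∃ c ∈ side G S x, ¬ G.Adj s c
  · obtain ⟨s, hs, c, hc, hsc⟩ := hSC
    exact ⟨c, y, hS.exists_side_ssubset_of_not_adj hs hc hsc⟩
  push Not at hSC
  have hmod : IsModule G (side G S x) := fun v hv => by
    by_cases hvS : v ∈ S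
    · exact Or.inl (hSC v hvS)
    · exact Or.inr fun c hc hvc => hv (mem_side_of_adj hc hvc hvS)
  obtain ⟨a, ha, b, hb, hab, hnab⟩ :
      ∃ a ∈ side G S x, ∃ b ∈ side G S x, a ≠ b ∧ ¬ G.Adj a b := by
    by_contra! h
    exact hC ⟨fun a ha b hb hab => h a ha b hb hab, hmod⟩
  refine ⟨b, a, exists_isMinSeparator_side_ssubset (A := {a}) rfl
    (fun _ h => h ▸ ReachOutside.refl (by simp)) (fun s hs => Or.inr ⟨a, rfl, hSC s hs a ha⟩)
    hb ?_ ha (Or.inl rfl)⟩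
  rintro (h | ⟨_, rfl, h⟩)
  exacts [hab h.symm, hnab h.symm]

theorem IsMinSeparator.exists_isMoplex_subset_side [Finite V] (hS : IsMinSeparator G x y S) :
    ∃ X, IsMoplex G X ∧ X ⊆ side G S x := by
  induction hC : side G S x using WellFoundedLT.induction generalizing x y S with
  | ind C ih =>
    subst hC
    by_cases hmod : IsCliqueModule G (side G S x)
    · exact ⟨_, hS.isMoplex_side hmod, subset_rfl⟩
    obtain ⟨v, w, T, hT, hlt⟩ := hS.exists_side_ssubset hmod
    obtain ⟨X, hX, hXT⟩ := ih _ hlt hT rfl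
    exact ⟨X, hX, hXT.trans hlt.subset⟩

end BerryBordat

section TwoMoplexes

variable [Finite V] {G : SimpleGraph V} {S₁ S₂ S U W : Set V} {x y : V}

lemma IsMinSeparator.exists_side_union_subset (h₁ : IsMinSeparator G x y S₁)
    (h₂ : IsMinSeparator G x y S₂) :
    ∃ S, IsMinSeparator G x y S ∧ side G S₁ y ∪ side G S₂ y ⊆ side G S y := by
  set K := side G (S₁ ∪ S₂) x
  have hK₁ : K ⊆ side G S₁ x := side_anti Set.subset_union_left
  have hK₂ : K ⊆ side G S₂ x := side_anti Set.subset_union_right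
  have hD₁ := h₁.1.disjoint_setNbhd_side hK₁
  have hD₂ := h₂.1.disjoint_setNbhd_side hK₂
  have hxK : x ∈ K := mem_side_self fun h => h.elim h₁.1.2.1 h₂.1.2.1
  have hy : y ∈ side G S₁ y := mem_side_self h₁.1.2.2.1
  have hsep : IsSeparator G x y (setNbhd G K) :=
    ⟨h₁.1.1, fun h => h.1 hxK, Set.disjoint_right.mp hD₁ hy, fun hr =>
      Set.disjoint_left.mp h₁.1.disjoint_side (hK₁ (side_setNbhd_subset hxK hr.symm)) hy⟩
  obtain ⟨S, hSK, hS⟩ := hsep.exists_isMinSeparator_subset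
  exact ⟨S, hS, Set.union_subset ((side_subset_side_of_disjoint hD₁).trans (side_anti hSK))
    ((side_subset_side_of_disjoint hD₂).trans (side_anti hSK))⟩

lemma HasExactlyTwoMoplexes.subset_side (h : HasExactlyTwoMoplexes G U W)
    (hS : IsMinSeparator G x y S) :
    U ⊆ side G S x ∧ W ⊆ side G S y ∨ U ⊆ side G S y ∧ W ⊆ side G S x := by
  obtain ⟨X, hX, hXx⟩ := hS.exists_isMoplex_subset_side
  obtain ⟨Y, hY, hYy⟩ := hS.symm.exists_isMoplex_subset_side
  have hXY : X ≠ Y := by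
    rintro rfl
    obtain ⟨v, hv⟩ := hX.1
    exact Set.disjoint_left.mp hS.1.disjoint_side (hXx hv) (hYy hv)
  rcases h.2.2.2 X hX with rfl | rfl <;> rcases h.2.2.2 Y hY with rfl | rfl
  · exact absurd rfl hXY
  · exact Or.inl ⟨hXx, hYy⟩
  · exact Or.inr ⟨hYy, hXx⟩
  · exact absurd rfl hXY

end TwoMoplexes

theorem moplex_unique_separation_general {V : Type*} [Fintype V] (G : SimpleGraph V)
    (U W : Set V) (h : HasExactlyTwoMoplexes G U W) (x y : V) :
    (∀ S, IsMinSeparator G x y S → ∀ u ∈ U, ReachOutside G S u x) ∨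
    (∀ S, IsMinSeparator G x y S → ∀ u ∈ U, ReachOutside G S u y) := by
  by_contra! ⟨⟨S₁, hS₁, u₁, hu₁, hu₁x⟩, S₂, hS₂, u₂, hu₂, hu₂y⟩
  have hU : U ⊆ side G S₁ y :=
    ((h.subset_side hS₁).resolve_left fun hUx => hu₁x (hUx.1 hu₁)).1
  have hW : W ⊆ side G S₂ y :=
    ((h.subset_side hS₂).resolve_right fun hUy => hu₂y (hUy.1 hu₂)).2
  obtain ⟨S, hS, hS₁₂⟩ := hS₁.exists_side_union_subset hS₂
  obtain ⟨X, hX, hXx⟩ := hS.exists_isMoplex_subset_side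
  obtain ⟨v, hv⟩ := hX.1
  have hXy : X ⊆ side G S y := by
    rcases h.2.2.2 X hX with rfl | rfl
    exacts [hU.trans (Set.subset_union_left.trans hS₁₂),
      hW.trans (Set.subset_union_right.trans hS₁₂)]
  exact Set.disjoint_left.mp hS.1.disjoint_side (hXx hv) (hXy hv)

/-- In a non-complete graph with exactly two moplexes, for non-adjacent `x`, `y`, the
moplex `U` lies on the side of `x` for every minimal `x,y`-separator, or on the side
of `y` for every minimal `x,y`-separator. -/
theorem moplex_unique_separation {V : Type*} [Fintype V] (G : SimpleGraph V)
    (U W : Set V) (hnc : NonComplete G) (h : HasExactlyTwoMoplexes G U W)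
    (x y : V) (hne : x ≠ y) (hxy : ¬ G.Adj x y) :
    (∀ S, IsMinSeparator G x y S → ∀ u ∈ U, ReachOutside G S u x) ∨
    (∀ S, IsMinSeparator G x y S → ∀ u ∈ U, ReachOutside G S u y) :=
  moplex_unique_separation_general G U W h x y

end MoplexPaper
end

section
/- Let G be a cobipartite graph with clique bipartition A, B, and let G' be obtained from G by adding cliques A'∪{u} on |A|+1 new vertices and B'∪{w} on |B|+1 new vertices, making A∪A'∪{u} and B∪B'∪{w} cliques, and fixing a* ∈ A' adjacent to all of B∪B' and b* ∈ B' adjacent to all of A∪A'. Then G' is cobipartite and has exactly two moplexes, namely {u} and {w}. -/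
open SimpleGraph

namespace MoplexPaper

variable {V : Type*}

section Construction

variable {V : Type*} (A B : Set V)

/-- Vertex set of the construction: `V` plus copies `A'` (indexed by `A`), `B'`
(indexed by `B`), and two new vertices `u` (false) and `w` (true). -/
abbrev V17 := Sum V (Sum A (Sum B Bool))

def u17 : V17 A B := Sum.inr (Sum.inr (Sum.inr false))
def w17 : V17 A B := Sum.inr (Sum.inr (Sum.inr true))

/-- The side `A ∪ A' ∪ {u}`. -/
def Aside17 : Set (V17 A B) :=
  {x | (∃ a : V, a ∈ A ∧ x = Sum.inl a) ∨ (∃ a : A, x = Sum.inr (Sum.inl a)) ∨ x = u17 A B}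

/-- The side `B ∪ B' ∪ {w}`. -/
def Bside17 : Set (V17 A B) :=
  {x | (∃ b : V, b ∈ B ∧ x = Sum.inl b) ∨ (∃ b : B, x = Sum.inr (Sum.inr (Sum.inl b))) ∨
    x = w17 A B}

/-- The construction `G'` from a cobipartite graph `G` with clique parts `A`, `B`:
make `A ∪ A' ∪ {u}` and `B ∪ B' ∪ {w}` cliques, keep the edges of `G`, join
`a* ∈ A'` to all of `B ∪ B'` and `b* ∈ B'` to all of `A ∪ A'`. -/
def G17 (G : SimpleGraph V) (a0 : A) (b0 : B) : SimpleGraph (V17 A B) :=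
  SimpleGraph.fromRel (fun x y =>
    (∃ a b : V, x = Sum.inl a ∧ y = Sum.inl b ∧ G.Adj a b) ∨
    (x ∈ Aside17 A B ∧ y ∈ Aside17 A B) ∨
    (x ∈ Bside17 A B ∧ y ∈ Bside17 A B) ∨
    (x = Sum.inr (Sum.inl a0) ∧ y ∈ Bside17 A B ∧ y ≠ w17 A B) ∨
    (x = Sum.inr (Sum.inr (Sum.inl b0)) ∧ y ∈ Aside17 A B ∧ y ≠ u17 A B))

end Construction


section Aux
variable {V : Type*}

lemma walk_stay {G : SimpleGraph V} {T C : Set V}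
    (hC : ∀ x ∈ C, ∀ y, G.Adj x y → y ∉ T → y ∈ C) :
    ∀ {p q : V} (pw : G.Walk p q), (∀ x ∈ pw.support, x ∉ T) → p ∈ C → q ∈ C := by
  intro p q pw
  induction pw with
  | nil => exact fun _ hp => hp
  | @cons p v q h pw ih =>
      intro hsup hp
      refine ih (fun x hx => hsup x (List.mem_cons_of_mem _ hx)) ?_
      exact hC p hp v h (hsup v (by simp [SimpleGraph.Walk.support_cons]))

lemma no_reach {G : SimpleGraph V} {T C : Set V}
    (hC : ∀ x ∈ C, ∀ y, G.Adj x y → y ∉ T → y ∈ C) {p q : V}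
    (hp : p ∈ C) (hq : q ∉ C) : ¬ ReachOutside G T p q := by
  rintro ⟨pw, hpw⟩
  exact hq (walk_stay hC pw hpw hp)

lemma reach_symm {G : SimpleGraph V} {T : Set V} {p q : V}
    (h : ReachOutside G T p q) : ReachOutside G T q p := by
  obtain ⟨pw, hpw⟩ := h
  exact ⟨pw.reverse, by simpa using hpw⟩

variable {A B : Set V} {G : SimpleGraph V} {a0 : A} {b0 : B}

lemma mem_Aside_u : u17 A B ∈ Aside17 A B := Or.inr (Or.inr rfl)

lemma mem_Bside_w : w17 A B ∈ Bside17 A B := Or.inr (Or.inr rfl)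

lemma mem_Aside_aS : (Sum.inr (Sum.inl a0) : V17 A B) ∈ Aside17 A B := Or.inr (Or.inl ⟨a0, rfl⟩)

lemma mem_Bside_bS : (Sum.inr (Sum.inr (Sum.inl b0)) : V17 A B) ∈ Bside17 A B :=
  Or.inr (Or.inl ⟨b0, rfl⟩)

lemma u_not_mem_Bside : u17 A B ∉ Bside17 A B := by
  rintro (⟨b, -, h⟩ | ⟨b, h⟩ | h) <;> simp [u17, w17] at h

lemma w_not_mem_Aside : w17 A B ∉ Aside17 A B := by
  rintro (⟨a, -, h⟩ | ⟨a, h⟩ | h) <;> simp [u17, w17] at h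

lemma aS_not_mem_Bside : (Sum.inr (Sum.inl a0) : V17 A B) ∉ Bside17 A B := by
  rintro (⟨b, -, h⟩ | ⟨b, h⟩ | h) <;> simp [u17, w17] at h

lemma bS_not_mem_Aside : (Sum.inr (Sum.inr (Sum.inl b0)) : V17 A B) ∉ Aside17 A B := by
  rintro (⟨a, -, h⟩ | ⟨a, h⟩ | h) <;> simp [u17, w17] at h

lemma u_ne_w : u17 A B ≠ w17 A B := by simp [u17, w17]

lemma aS_ne_u : (Sum.inr (Sum.inl a0) : V17 A B) ≠ u17 A B := by simp [u17]

lemma bS_ne_w : (Sum.inr (Sum.inr (Sum.inl b0)) : V17 A B) ≠ w17 A B := by simp [w17]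

lemma side_disjoint (hd : Disjoint A B) {x : V17 A B}
    (hx : x ∈ Aside17 A B) (hx' : x ∈ Bside17 A B) : False := by
  obtain ⟨a, ha, rfl⟩ | ⟨a, rfl⟩ | rfl := hx
  · obtain ⟨b, hb, h⟩ | ⟨b, h⟩ | h := hx'
    · rw [Sum.inl.injEq] at h; subst h
      exact (hd.ne_of_mem ha hb) rfl
    · simp at h
    · simp [w17] at h
  · exact aS_not_mem_Bside hx'
  · exact u_not_mem_Bside hx'

lemma side_cover (hU : A ∪ B = Set.univ) (x : V17 A B) :
    x ∈ Aside17 A B ∨ x ∈ Bside17 A B := by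
  match x with
  | Sum.inl v =>
      have : v ∈ A ∪ B := hU ▸ Set.mem_univ v
      rcases this with h | h
      · exact Or.inl (Or.inl ⟨v, h, rfl⟩)
      · exact Or.inr (Or.inl ⟨v, h, rfl⟩)
  | Sum.inr (Sum.inl a) => exact Or.inl (Or.inr (Or.inl ⟨a, rfl⟩))
  | Sum.inr (Sum.inr (Sum.inl b)) => exact Or.inr (Or.inr (Or.inl ⟨b, rfl⟩))
  | Sum.inr (Sum.inr (Sum.inr false)) => exact Or.inl (Or.inr (Or.inr rfl))
  | Sum.inr (Sum.inr (Sum.inr true)) => exact Or.inr (Or.inr (Or.inr rfl))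

lemma adjA {x y : V17 A B} (hx : x ∈ Aside17 A B) (hy : y ∈ Aside17 A B) (hne : x ≠ y) :
    (G17 A B G a0 b0).Adj x y :=
  ⟨hne, Or.inl (Or.inr (Or.inl ⟨hx, hy⟩))⟩

lemma adjB {x y : V17 A B} (hx : x ∈ Bside17 A B) (hy : y ∈ Bside17 A B) (hne : x ≠ y) :
    (G17 A B G a0 b0).Adj x y :=
  ⟨hne, Or.inl (Or.inr (Or.inr (Or.inl ⟨hx, hy⟩)))⟩

lemma adj_u_iff {y : V17 A B} :
    (G17 A B G a0 b0).Adj (u17 A B) y ↔ y ∈ Aside17 A B ∧ y ≠ u17 A B := by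
  constructor
  · rintro ⟨hne, h | h⟩
    · rcases h with ⟨a, b, ha, -, -⟩ | ⟨-, hy⟩ | ⟨hu, -⟩ | ⟨hu, -⟩ | ⟨hu, -⟩
      · simp [u17] at ha
      · exact ⟨hy, Ne.symm hne⟩
      · exact absurd hu u_not_mem_Bside
      · simp [u17] at hu
      · simp [u17] at hu
    · rcases h with ⟨a, b, -, hb, -⟩ | ⟨hy, -⟩ | ⟨-, hu⟩ | ⟨-, hu, -⟩ | ⟨-, -, hu⟩
      · simp [u17] at hb
      · exact ⟨hy, Ne.symm hne⟩
      · exact absurd hu u_not_mem_Bside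
      · exact absurd hu u_not_mem_Bside
      · exact absurd rfl hu
  · rintro ⟨hy, hne⟩
    exact ⟨Ne.symm hne, Or.inl (Or.inr (Or.inl ⟨mem_Aside_u, hy⟩))⟩

lemma adj_w_iff {y : V17 A B} :
    (G17 A B G a0 b0).Adj (w17 A B) y ↔ y ∈ Bside17 A B ∧ y ≠ w17 A B := by
  constructor
  · rintro ⟨hne, h | h⟩
    · rcases h with ⟨a, b, ha, -, -⟩ | ⟨hw, -⟩ | ⟨-, hy⟩ | ⟨hw, -⟩ | ⟨hw, -⟩
      · simp [w17] at ha
      · exact absurd hw w_not_mem_Aside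
      · exact ⟨hy, Ne.symm hne⟩
      · simp [w17] at hw
      · simp [w17] at hw
    · rcases h with ⟨a, b, -, hb, -⟩ | ⟨-, hw⟩ | ⟨hy, -⟩ | ⟨-, -, hw⟩ | ⟨-, hw, -⟩
      · simp [w17] at hb
      · exact absurd hw w_not_mem_Aside
      · exact ⟨hy, Ne.symm hne⟩
      · exact absurd rfl hw
      · exact absurd hw w_not_mem_Aside
  · rintro ⟨hy, hne⟩
    exact ⟨Ne.symm hne, Or.inl (Or.inr (Or.inr (Or.inl ⟨mem_Bside_w, hy⟩)))⟩

lemma adj_bS {y : V17 A B} (hy : y ∈ Aside17 A B) (hne : y ≠ u17 A B) :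
    (G17 A B G a0 b0).Adj (Sum.inr (Sum.inr (Sum.inl b0))) y :=
  ⟨fun h => bS_not_mem_Aside (h ▸ hy), Or.inl (Or.inr (Or.inr (Or.inr (Or.inr ⟨rfl, hy, hne⟩))))⟩

lemma adj_aS {y : V17 A B} (hy : y ∈ Bside17 A B) (hne : y ≠ w17 A B) :
    (G17 A B G a0 b0).Adj (Sum.inr (Sum.inl a0)) y :=
  ⟨fun h => aS_not_mem_Bside (h ▸ hy), Or.inl (Or.inr (Or.inr (Or.inr (Or.inl ⟨rfl, hy, hne⟩))))⟩

end Aux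


section Aux2
variable {V : Type*} {A B : Set V} {G : SimpleGraph V} {a0 : A} {b0 : B}

lemma setNbhd_u : setNbhd (G17 A B G a0 b0) {u17 A B} = Aside17 A B \ {u17 A B} := by
  ext v
  constructor
  · rintro ⟨hv, x, rfl, hadj⟩
    have := adj_u_iff.mp hadj.symm
    exact ⟨this.1, this.2⟩
  · rintro ⟨hv, hne⟩
    exact ⟨hne, u17 A B, rfl, (adj_u_iff.mpr ⟨hv, hne⟩).symm⟩

lemma setNbhd_w : setNbhd (G17 A B G a0 b0) {w17 A B} = Bside17 A B \ {w17 A B} := by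
  ext v
  constructor
  · rintro ⟨hv, x, rfl, hadj⟩
    have := adj_w_iff.mp hadj.symm
    exact ⟨this.1, this.2⟩
  · rintro ⟨hv, hne⟩
    exact ⟨hne, w17 A B, rfl, (adj_w_iff.mpr ⟨hv, hne⟩).symm⟩

/-- Any clique module containing `u` is `{u}`. -/
lemma cliqueModule_u {Y : Set (V17 A B)} (hY : IsCliqueModule (G17 A B G a0 b0) Y)
    (hu : u17 A B ∈ Y) : Y = {u17 A B} := by
  ext y
  simp only [Set.mem_singleton_iff]
  refine ⟨fun hy => ?_, fun h => h ▸ hu⟩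
  by_contra hne
  have hadj : (G17 A B G a0 b0).Adj (u17 A B) y := hY.1 hu hy (Ne.symm hne)
  have hyA : y ∈ Aside17 A B ∧ y ≠ u17 A B := adj_u_iff.mp hadj
  have hbS : (Sum.inr (Sum.inr (Sum.inl b0)) : V17 A B) ∉ Y := by
    intro hb
    have : (G17 A B G a0 b0).Adj (u17 A B) (Sum.inr (Sum.inr (Sum.inl b0))) :=
      hY.1 hu hb (by simp [u17])
    exact bS_not_mem_Aside (adj_u_iff.mp this).1
  rcases hY.2 _ hbS with h | h
  · exact bS_not_mem_Aside (adj_u_iff.mp (h _ hu).symm).1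
  · exact h y hy (adj_bS hyA.1 hyA.2)

/-- Any clique module containing `w` is `{w}`. -/
lemma cliqueModule_w {Y : Set (V17 A B)} (hY : IsCliqueModule (G17 A B G a0 b0) Y)
    (hw : w17 A B ∈ Y) : Y = {w17 A B} := by
  ext y
  simp only [Set.mem_singleton_iff]
  refine ⟨fun hy => ?_, fun h => h ▸ hw⟩
  by_contra hne
  have hadj : (G17 A B G a0 b0).Adj (w17 A B) y := hY.1 hw hy (Ne.symm hne)
  have hyB : y ∈ Bside17 A B ∧ y ≠ w17 A B := adj_w_iff.mp hadj
  have haS : (Sum.inr (Sum.inl a0) : V17 A B) ∉ Y := by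
    intro ha
    have : (G17 A B G a0 b0).Adj (w17 A B) (Sum.inr (Sum.inl a0)) :=
      hY.1 hw ha (by simp [w17])
    exact aS_not_mem_Bside (adj_w_iff.mp this).1
  rcases hY.2 _ haS with h | h
  · exact aS_not_mem_Bside (adj_w_iff.mp (h _ hw).symm).1
  · exact h y hy (adj_aS hyB.1 hyB.2)

lemma singleton_cliqueModule_s17 (G' : SimpleGraph (V17 A B)) (v : V17 A B) :
    IsCliqueModule G' {v} := by
  constructor
  · intro x hx y hy hne
    simp only [Set.mem_singleton_iff] at hx hy
    exact absurd (hx.trans hy.symm) hne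
  · intro z hz
    by_cases h : G'.Adj z v
    · exact Or.inl (by rintro x rfl; exact h)
    · exact Or.inr (by rintro x rfl; exact h)

lemma bS_ne_u : (Sum.inr (Sum.inr (Sum.inl b0)) : V17 A B) ≠ u17 A B := by simp [u17]
lemma aS_ne_w : (Sum.inr (Sum.inl a0) : V17 A B) ≠ w17 A B := by simp [w17]

lemma moplex_u : IsMoplex (G17 A B G a0 b0) {u17 A B} := by
  refine ⟨⟨u17 A B, rfl⟩, singleton_cliqueModule_s17 _ _, ?_, Or.inr ?_⟩
  · intro Y hsub hY
    exact cliqueModule_u hY (hsub rfl)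
  · refine ⟨u17 A B, w17 A B, u_ne_w, ?_, ?_⟩
    · rw [setNbhd_u]
      refine ⟨?_, by simp, fun h => absurd h.1 w_not_mem_Aside, ?_⟩
      · intro h
        exact w_not_mem_Aside (adj_u_iff.mp h).1
      · refine no_reach (C := {u17 A B}) ?_ rfl (by simp [Ne.symm u_ne_w])
        rintro x rfl y hadj hyT
        exact absurd (adj_u_iff.mp hadj) (by simpa [Set.mem_diff] using hyT)
    · rw [setNbhd_u]
      intro T hT hTsep
      obtain ⟨s, hsS, hsT⟩ := Set.exists_of_ssubset hT
      have hbT : (Sum.inr (Sum.inr (Sum.inl b0)) : V17 A B) ∉ T :=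
        fun h => bS_not_mem_Aside (hT.subset h).1
      have hwT : w17 A B ∉ T := fun h => w_not_mem_Aside (hT.subset h).1
      have huT : u17 A B ∉ T := fun h => (hT.subset h).2 rfl
      refine hTsep.2.2.2 ⟨Walk.cons (adj_u_iff.mpr ⟨hsS.1, hsS.2⟩)
        (Walk.cons ((adj_bS hsS.1 hsS.2).symm)
        (Walk.cons (adjB mem_Bside_bS mem_Bside_w bS_ne_w) Walk.nil)), ?_⟩
      intro x hx
      simp only [Walk.support_cons, Walk.support_nil, List.mem_cons,
        List.mem_singleton] at hx
      rcases hx with rfl | rfl | rfl | rfl | h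
      · exact huT
      · exact hsT
      · exact hbT
      · exact hwT
      · simp at h

lemma moplex_w : IsMoplex (G17 A B G a0 b0) {w17 A B} := by
  refine ⟨⟨w17 A B, rfl⟩, singleton_cliqueModule_s17 _ _, ?_, Or.inr ?_⟩
  · intro Y hsub hY
    exact cliqueModule_w hY (hsub rfl)
  · refine ⟨w17 A B, u17 A B, Ne.symm u_ne_w, ?_, ?_⟩
    · rw [setNbhd_w]
      refine ⟨?_, by simp, fun h => absurd h.1 u_not_mem_Bside, ?_⟩
      · intro h
        exact u_not_mem_Bside (adj_w_iff.mp h).1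
      · refine no_reach (C := {w17 A B}) ?_ rfl (by simp [u_ne_w])
        rintro x rfl y hadj hyT
        exact absurd (adj_w_iff.mp hadj) (by simpa [Set.mem_diff] using hyT)
    · rw [setNbhd_w]
      intro T hT hTsep
      obtain ⟨s, hsS, hsT⟩ := Set.exists_of_ssubset hT
      have haT : (Sum.inr (Sum.inl a0) : V17 A B) ∉ T :=
        fun h => aS_not_mem_Bside (hT.subset h).1
      have huT : u17 A B ∉ T := fun h => u_not_mem_Bside (hT.subset h).1
      have hwT : w17 A B ∉ T := fun h => (hT.subset h).2 rfl
      refine hTsep.2.2.2 ⟨Walk.cons (adj_w_iff.mpr ⟨hsS.1, hsS.2⟩)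
        (Walk.cons ((adj_aS hsS.1 hsS.2).symm)
        (Walk.cons (adjA mem_Aside_aS mem_Aside_u aS_ne_u) Walk.nil)), ?_⟩
      intro x hx
      simp only [Walk.support_cons, Walk.support_nil, List.mem_cons,
        List.mem_singleton] at hx
      rcases hx with rfl | rfl | rfl | rfl | h
      · exact hwT
      · exact hsT
      · exact haT
      · exact huT
      · simp at h

end Aux2


section Core

variable {V' : Type*}

/-- Core argument: a moplex-like set contained in one side and missing the two
special vertices leads to a contradiction. -/
lemma core_contra {G' : SimpleGraph V'} {As Bs : Set V'} {u w : V'}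
    (hcov : ∀ x, x ∈ As ∨ x ∈ Bs)
    (hdisj : ∀ ⦃x⦄, x ∈ As → x ∈ Bs → False)
    (hu_adj : ∀ y, G'.Adj u y ↔ y ∈ As ∧ y ≠ u)
    (hw_adj : ∀ y, G'.Adj w y → y ∈ Bs)
    (hAc : ∀ ⦃x⦄, x ∈ As → ∀ ⦃y⦄, y ∈ As → x ≠ y → G'.Adj x y)
    (hBc : ∀ ⦃x⦄, x ∈ Bs → ∀ ⦃y⦄, y ∈ Bs → x ≠ y → G'.Adj x y)
    (huA : u ∈ As) (hwB : w ∈ Bs)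
    {X : Set V'} (hclq : G'.IsClique X) (hmod : IsModule G' X)
    (hnb : setNbhd G' X = ∅ ∨ IsMinimalSeparator G' (setNbhd G' X))
    {x0 : V'} (hx0 : x0 ∈ X) (hx0A : x0 ∈ As)
    (huX : u ∉ X) (hwX : w ∉ X) : False := by
  have hXA : ∀ y ∈ X, y ∈ As ∧ y ≠ u := by
    intro y hy
    refine ⟨?_, fun h => huX (h ▸ hy)⟩
    by_contra hyA
    rcases hmod u huX with h | h
    · exact hyA ((hu_adj y).mp (h y hy)).1
    · exact h x0 hx0 ((hu_adj x0).mpr ⟨hx0A, fun e => huX (e ▸ hx0)⟩)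
  have huS : u ∈ setNbhd G' X :=
    ⟨huX, x0, hx0, (hu_adj x0).mpr ⟨hx0A, (hXA x0 hx0).2⟩⟩
  have hAsS : ∀ y ∈ As, y ∉ X → y ∈ setNbhd G' X := by
    intro y hyA hyX
    by_cases hyu : y = u
    · exact hyu ▸ huS
    · exact ⟨hyX, x0, hx0, hAc hyA hx0A (fun e => hyX (by rw [e]; exact hx0))⟩
  have hwS : w ∉ setNbhd G' X := by
    rintro ⟨hwX', x, hx, hadj⟩
    exact hdisj (hXA x hx).1 (hw_adj x hadj)
  rcases hnb with h | ⟨p, q, hpq, hpsep, hmin⟩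
  · rw [h] at huS; exact huS
  have hclass : ∀ z, z ∉ setNbhd G' X →
      z ∈ X ∨ (z ∈ Bs ∧ z ∉ setNbhd G' X ∧ z ∉ X) := by
    intro z hz
    rcases hcov z with hzA | hzB
    · by_cases hzX : z ∈ X
      · exact Or.inl hzX
      · exact absurd (hAsS z hzA hzX) hz
    · by_cases hzX : z ∈ X
      · exact Or.inl hzX
      · exact Or.inr ⟨hzB, hz, hzX⟩
  have hTs : setNbhd G' X \ {u} ⊂ setNbhd G' X := by
    refine Set.ssubset_iff_of_subset Set.diff_subset |>.mpr ⟨u, huS, by simp⟩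
  -- the smaller set still separates X from the `B`-side residue
  have hno : ∀ {r s : V'}, r ∈ X → s ∈ Bs → s ∉ X →
      ¬ ReachOutside G' (setNbhd G' X \ {u}) r s := by
    intro r s hrX hsB hsX
    refine no_reach (C := X ∪ {u}) ?_ (Or.inl hrX) ?_
    · rintro x (hx | rfl) y hadj hyT
      · by_cases hyX : y ∈ X
        · exact Or.inl hyX
        · have hyS : y ∈ setNbhd G' X := ⟨hyX, x, hx, hadj.symm⟩
          have : y = u := by
            by_contra hyu
            exact hyT ⟨hyS, hyu⟩
          exact Or.inr this
      · have hy := (hu_adj y).mp hadj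
        by_cases hyX : y ∈ X
        · exact Or.inl hyX
        · exact absurd ⟨hAsS y hy.1 hyX, hy.2⟩ hyT
    · rintro (h | h)
      · exact hsX h
      · exact hdisj huA (h ▸ hsB)
  rcases hclass p hpsep.2.1 with hpX | hpB <;> rcases hclass q hpsep.2.2.1 with hqX | hqB
  · exact hpsep.1 (hclq hpX hqX hpq)
  · exact hmin _ hTs ⟨hpsep.1, fun h => hpsep.2.1 h.1, fun h => hpsep.2.2.1 h.1,
      hno hpX hqB.1 hqB.2.2⟩
  · refine hmin _ hTs ⟨hpsep.1, fun h => hpsep.2.1 h.1, fun h => hpsep.2.2.1 h.1, ?_⟩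
    intro h
    exact hno hqX hpB.1 hpB.2.2 (reach_symm h)
  · refine hpsep.2.2.2 ?_
    by_cases hpw : p = w
    · subst hpw
      exact ⟨Walk.cons (hBc hwB hqB.1 hpq) Walk.nil, by
        intro x hx
        simp only [Walk.support_cons, Walk.support_nil, List.mem_cons,
          List.mem_singleton] at hx
        rcases hx with rfl | rfl | h
        · exact hwS
        · exact hqB.2.1
        · simp at h⟩
    · by_cases hqw : q = w
      · subst hqw
        exact ⟨Walk.cons (hBc hpB.1 hwB hpw) Walk.nil, by
          intro x hx
          simp only [Walk.support_cons, Walk.support_nil, List.mem_cons,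
            List.mem_singleton] at hx
          rcases hx with rfl | rfl | h
          · exact hpB.2.1
          · exact hwS
          · simp at h⟩
      · exact ⟨Walk.cons (hBc hpB.1 hwB hpw)
          (Walk.cons (hBc hwB hqB.1 (Ne.symm hqw)) Walk.nil), by
          intro x hx
          simp only [Walk.support_cons, Walk.support_nil, List.mem_cons,
            List.mem_singleton] at hx
          rcases hx with rfl | rfl | rfl | h
          · exact hpB.2.1
          · exact hwS
          · exact hqB.2.1
          · simp at h⟩

end Core

section Classify
variable {V : Type*} {A B : Set V} {G : SimpleGraph V} {a0 : A} {b0 : B}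

lemma moplex_classify (hd : Disjoint A B) (hU : A ∪ B = Set.univ)
    {X : Set (V17 A B)} (hX : IsMoplex (G17 A B G a0 b0) X) :
    X = {u17 A B} ∨ X = {w17 A B} := by
  obtain ⟨⟨x0, hx0⟩, hcm, hmax, hnb⟩ := hX
  by_cases hu : u17 A B ∈ X
  · exact Or.inl (cliqueModule_u hcm hu)
  by_cases hw : w17 A B ∈ X
  · exact Or.inr (cliqueModule_w hcm hw)
  exfalso
  rcases side_cover hU x0 with hx0A | hx0B
  · exact core_contra (side_cover hU) (fun x hx hx' => side_disjoint hd hx hx')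
      (fun y => adj_u_iff) (fun y h => (adj_w_iff.mp h).1)
      (fun x hx y hy hne => adjA hx hy hne) (fun x hx y hy hne => adjB hx hy hne)
      mem_Aside_u mem_Bside_w hcm.1 hcm.2 hnb hx0 hx0A hu hw
  · exact core_contra (fun x => (side_cover hU x).symm)
      (fun x hx hx' => side_disjoint hd hx' hx)
      (fun y => adj_w_iff) (fun y h => (adj_u_iff.mp h).1)
      (fun x hx y hy hne => adjB hx hy hne) (fun x hx y hy hne => adjA hx hy hne)
      mem_Bside_w mem_Aside_u hcm.1 hcm.2 hnb hx0 hx0B hw hu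

end Classify

/-- The construction applied to a cobipartite graph yields a cobipartite graph with
exactly the two moplexes `{u}` and `{w}`. -/
theorem cobipartite_construction_twoMoplexes {V : Type*} [Fintype V]
    (G : SimpleGraph V) (A B : Set V)
    (hd : Disjoint A B) (hU : A ∪ B = Set.univ)
    (hA : G.IsClique A) (hB : G.IsClique B) (a0 : A) (b0 : B) :
    (∃ X Y : Set (V17 A B), Disjoint X Y ∧ X ∪ Y = Set.univ ∧
      (G17 A B G a0 b0).IsClique X ∧ (G17 A B G a0 b0).IsClique Y) ∧
    IsMoplex (G17 A B G a0 b0) {u17 A B} ∧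
    IsMoplex (G17 A B G a0 b0) {w17 A B} ∧
    (∀ X, IsMoplex (G17 A B G a0 b0) X → X = {u17 A B} ∨ X = {w17 A B}) := by
  refine ⟨⟨Aside17 A B, Bside17 A B, ?_, ?_, ?_, ?_⟩, moplex_u, moplex_w, ?_⟩
  · exact Set.disjoint_left.mpr fun x hx hx' => side_disjoint hd hx hx'
  · exact Set.eq_univ_of_forall fun x => (side_cover hU x).elim Or.inl Or.inr
  · exact fun x hx y hy hne => adjA hx hy hne
  · exact fun x hx y hy hne => adjB hx hy hne
  · exact fun X hX => moplex_classify hd hU hX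

end MoplexPaper
end

section
/- Let G be a cocomparability graph, σ an umbrella-free LDFS ordering (v_1,…,v_n) of G, and suppose v_i v_{i+1} ∉ E(G) for some i. Then v_i is avoidable in G: every two non-adjacent neighbours v_j, v_k of v_i lie on a common induced 4-cycle with v_i. -/
/-!
Since `v_i v_{i+1}` is a non-edge, the LDFS condition on `v_i < v_{i+1} < v_k` rules out any
neighbour `v_k` of `v_i` after `v_i`. So two non-adjacent neighbours `a < b` of `v_i` satisfy
`a < b < v_i`; LDFS gives `a < d < b` with `db` an edge and `d v_i` a non-edge, and
umbrella-freeness of `a < d < v_i` makes `ad` an edge, so `a d b v_i` is an induced `C₄`.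
-/

open SimpleGraph

namespace MoplexPaper

variable {V : Type*}

-- The vertex ordering `σ` is the linear order on `V`.
def IsLDFSOrdering [LinearOrder V] (G : SimpleGraph V) : Prop :=
  ∀ a b c : V, a < b → b < c → G.Adj a c → ¬ G.Adj a b →
    ∃ d, a < d ∧ d < b ∧ G.Adj d b ∧ ¬ G.Adj d c

def IsUmbrellaFree [LinearOrder V] (G : SimpleGraph V) : Prop :=
  ∀ a b c : V, a < b → b < c → G.Adj a c → G.Adj a b ∨ G.Adj b c

theorem isInducedCycle_square {G : SimpleGraph V} {a d b v : V}
    (had : G.Adj a d) (hdb : G.Adj d b) (hbv : G.Adj b v) (hva : G.Adj v a)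
    (hab : ¬ G.Adj a b) (hdv : ¬ G.Adj d v) (hab' : a ≠ b) (hdv' : d ≠ v) :
    IsInducedCycle G (.cons had (.cons hdb (.cons hbv (.cons hva .nil)))) := by
  refine ⟨?_, fun x hx y hy hxy => ?_⟩
  · rw [Walk.isCycle_def, Walk.isTrail_def]
    simp [had.ne, had.ne.symm, hdb.ne, hbv.ne, hva.ne, hva.ne.symm, hab', hab'.symm, hdv']
  · simp only [Walk.support_cons, Walk.support_nil, List.mem_cons, List.not_mem_nil,
      or_false] at hx hy
    simp only [Walk.edges_cons, Walk.edges_nil, List.mem_cons, List.not_mem_nil, or_false]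
    rcases hx with rfl | rfl | rfl | rfl | rfl <;> rcases hy with rfl | rfl | rfl | rfl | rfl <;>
      simp_all [Sym2.eq_swap, G.adj_comm]

theorem avoidable_of_forall_exists_square {G : SimpleGraph V} {v : V}
    (h : ∀ a b, G.Adj v a → G.Adj v b → a ≠ b → ¬ G.Adj a b →
      ∃ d, d ≠ v ∧ ¬ G.Adj d v ∧ G.Adj d a ∧ G.Adj d b) :
    Avoidable G v := by
  rintro a b ⟨hab', hva, hvb, hab⟩
  obtain ⟨d, hdv', hdv, hda, hdb⟩ := h a b hva hvb hab' hab
  exact ⟨a, _, isInducedCycle_square hda.symm hdb hvb.symm hva hab hdv hab' hdv',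
    by simp, by simp, by simp⟩

section Ordering

variable [LinearOrder V] {G : SimpleGraph V}

theorem IsLDFSOrdering.exists_square (hL : IsLDFSOrdering G) (hU : IsUmbrellaFree G)
    {a b c : V} (hab : a < b) (hbc : b < c) (hac : G.Adj a c) (hnab : ¬ G.Adj a b) :
    ∃ d, a < d ∧ d < b ∧ G.Adj a d ∧ G.Adj d b ∧ ¬ G.Adj d c := by
  obtain ⟨d, had, hdb, hdb', hdc⟩ := hL a b c hab hbc hac hnab
  have had' : G.Adj a d := (hU a d c had (hdb.trans hbc) hac).resolve_right hdc
  exact ⟨d, had, hdb, had', hdb', hdc⟩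

theorem IsLDFSOrdering.lt_of_adj_of_covBy_of_not_adj (hL : IsLDFSOrdering G)
    {i j k : V} (hij : i ⋖ j) (hnij : ¬ G.Adj i j) (hik : G.Adj i k) : k < i := by
  by_contra! hki
  have hik' : i < k := hki.lt_of_ne hik.ne
  have hjk : j < k := by
    refine lt_of_not_ge fun hkj => hij.2 hik' (hkj.lt_of_ne ?_)
    rintro rfl
    exact hnij hik
  obtain ⟨d, hid, hdj, -⟩ := hL i j k hij.1 hjk hik hnij
  exact hij.2 hid hdj

theorem IsLDFSOrdering.exists_square_of_covBy_of_not_adj (hL : IsLDFSOrdering G)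
    (hU : IsUmbrellaFree G) {i j : V} (hij : i ⋖ j) (hnij : ¬ G.Adj i j) :
    ∀ a b, G.Adj i a → G.Adj i b → a ≠ b → ¬ G.Adj a b →
      ∃ d, d ≠ i ∧ ¬ G.Adj d i ∧ G.Adj d a ∧ G.Adj d b := by
  have lt_i {k} (hk : G.Adj i k) : k < i := hL.lt_of_adj_of_covBy_of_not_adj hij hnij hk
  suffices h : ∀ a b, G.Adj i a → G.Adj i b → a < b → ¬ G.Adj a b →
      ∃ d, d ≠ i ∧ ¬ G.Adj d i ∧ G.Adj d a ∧ G.Adj d b by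
    intro a b hia hib hab' hab
    rcases hab'.lt_or_gt with hlt | hgt
    · exact h a b hia hib hlt hab
    · obtain ⟨d, hdi', hdi, hdb, hda⟩ := h b a hib hia hgt fun h => hab h.symm
      exact ⟨d, hdi', hdi, hda, hdb⟩
  intro a b hia hib hab hnab
  obtain ⟨d, -, hdb, had, hdb', hdi⟩ := hL.exists_square hU hab (lt_i hib) hia.symm hnab
  exact ⟨d, (hdb.trans (lt_i hib)).ne, hdi, had.symm, hdb'⟩

end Ordering

theorem umbrellaFree_LDFS_nonEdge_avoidable_general (n : ℕ) (G : SimpleGraph (Fin n))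
    (hldfs : ∀ a b c : Fin n, a < b → b < c → G.Adj a c → ¬ G.Adj a b →
      ∃ d, a < d ∧ d < b ∧ G.Adj d b ∧ ¬ G.Adj d c)
    (humb : ∀ a b c : Fin n, a < b → b < c → G.Adj a c → G.Adj a b ∨ G.Adj b c)
    (i j : Fin n) (hij : (i : ℕ) + 1 = (j : ℕ)) (hnadj : ¬ G.Adj i j) :
    Avoidable G i ∧
    ∀ a b : Fin n, G.Adj i a → G.Adj i b → a ≠ b → ¬ G.Adj a b →
      ∃ d : Fin n, d ≠ i ∧ ¬ G.Adj d i ∧ G.Adj d a ∧ G.Adj d b := by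
  have hcov : i ⋖ j := Fin.covBy_iff.mpr (Nat.covBy_iff_add_one_eq.mpr hij)
  have hsquare := IsLDFSOrdering.exists_square_of_covBy_of_not_adj hldfs humb hcov hnadj
  exact ⟨avoidable_of_forall_exists_square hsquare, hsquare⟩

/-- In an umbrella-free LDFS ordering of a connected cocomparability graph, if
`v_i v_{i+1} ∉ E(G)` then `v_i` is avoidable: every two non-adjacent neighbours of
`v_i` lie with it on a common induced 4-cycle. -/
theorem umbrellaFree_LDFS_nonEdge_avoidable (n : ℕ) (G : SimpleGraph (Fin n))
    (hconn : G.Connected)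
    (hldfs : ∀ a b c : Fin n, a < b → b < c → G.Adj a c → ¬ G.Adj a b →
      ∃ d, a < d ∧ d < b ∧ G.Adj d b ∧ ¬ G.Adj d c)
    (humb : ∀ a b c : Fin n, a < b → b < c → G.Adj a c → G.Adj a b ∨ G.Adj b c)
    (i j : Fin n) (hij : (i : ℕ) + 1 = (j : ℕ)) (hnadj : ¬ G.Adj i j) :
    Avoidable G i ∧
    ∀ a b : Fin n, G.Adj i a → G.Adj i b → a ≠ b → ¬ G.Adj a b →
      ∃ d : Fin n, d ≠ i ∧ ¬ G.Adj d i ∧ G.Adj d a ∧ G.Adj d b :=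
  umbrellaFree_LDFS_nonEdge_avoidable_general n G hldfs humb i j hij hnadj

end MoplexPaper
end
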